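/- arXiv:2101.00205 — 11 statements merged into one kernel-verified Lean document; each statement's English description precedes it below -/
import Mathlib

section
/- In the coefficient dynamics d_{k+1}^i = d_k^i · (Σ_j (λ_j - λ_i)(d_{k-1}^j)^2)/(Σ_j λ_j (d_{k-1}^j)^2) with 0 < λ_1 ≤ ... ≤ λ_n and d_{k-1} ≠ 0, one has |d_{k+1}^i| ≤ |d_k^i| · max{λ_i/λ_1 - 1, 1 - λ_i/λ_n} for every i. -/
/-!
Writing `w j = (d_{k-1}^j)^2`, the BB factor is `1 - λ_i / ρ`, where `ρ = Σ λ_j w_j / Σ w_j` is a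
weighted mean of the eigenvalues and hence lies in `[λ_1, λ_n]`. Since `μ ↦ μ / ρ` is antitone in
`ρ` for `μ ≥ 0`, the factor lies between `1 - λ_i / λ_1` and `1 - λ_i / λ_n`.
-/

open Finset

lemma sum_sq_pos_of_ne_zero {ι : Type*} [Fintype ι] {x : ι → ℝ} (hx : x ≠ 0) :
    0 < ∑ j, x j ^ 2 := by
  obtain ⟨j, hj⟩ := Function.ne_iff.mp hx
  exact sum_pos' (fun j _ => sq_nonneg (x j)) ⟨j, mem_univ j, sq_pos_of_ne_zero hj⟩

lemma weighted_mean_mem_Icc {ι : Type*} [Fintype ι] {lam w : ι → ℝ} {m M : ℝ}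
    (hw : ∀ j, 0 ≤ w j) (hW : 0 < ∑ j, w j) (hm : ∀ j, m ≤ lam j) (hM : ∀ j, lam j ≤ M) :
    (∑ j, lam j * w j) / ∑ j, w j ∈ Set.Icc m M := by
  rw [Set.mem_Icc, le_div_iff₀ hW, div_le_iff₀ hW, mul_sum, mul_sum]
  exact ⟨sum_le_sum fun j _ => mul_le_mul_of_nonneg_right (hm j) (hw j),
    sum_le_sum fun j _ => mul_le_mul_of_nonneg_right (hM j) (hw j)⟩

lemma sum_sub_mul_div_sum_mul {ι : Type*} [Fintype ι] (lam w : ι → ℝ) (μ : ℝ)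
    (hS : ∑ j, lam j * w j ≠ 0) :
    (∑ j, (lam j - μ) * w j) / ∑ j, lam j * w j
      = 1 - μ / ((∑ j, lam j * w j) / ∑ j, w j) := by
  simp only [sub_mul, sum_sub_distrib, ← mul_sum]
  field_simp

lemma abs_one_sub_div_le_max {m M ρ μ : ℝ} (hm : 0 < m) (hmρ : m ≤ ρ) (hρM : ρ ≤ M)
    (hμ : 0 ≤ μ) : |1 - μ / ρ| ≤ max (μ / m - 1) (1 - μ / M) := by
  have hρ : 0 < ρ := hm.trans_le hmρ
  rw [abs_le']
  constructor
  · exact le_max_of_le_right (by gcongr)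
  · exact le_max_of_le_left (by rw [neg_sub]; gcongr)

theorem bb_general_ratio_bound_general {n : ℕ}
    (lam : Fin (n + 1) → ℝ) (hpos : 0 < lam 0) (hmono : Monotone lam)
    (d : ℕ → Fin (n + 1) → ℝ) (k : ℕ) (hnz : d (k - 1) ≠ 0)
    (hrec : ∀ i, d (k + 1) i = d k i *
      ((∑ j, (lam j - lam i) * d (k - 1) j ^ 2) / (∑ j, lam j * d (k - 1) j ^ 2))) :
    ∀ i, |d (k + 1) i| ≤ |d k i| * max (lam i / lam 0 - 1) (1 - lam i / lam (Fin.last n)) := by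
  intro i
  have hW := sum_sq_pos_of_ne_zero hnz
  obtain ⟨hlo, hhi⟩ := weighted_mean_mem_Icc (fun j => sq_nonneg (d (k - 1) j)) hW
    (fun j => hmono (Fin.zero_le j)) (fun j => hmono (Fin.le_last j))
  have hS : 0 < ∑ j, lam j * d (k - 1) j ^ 2 :=
    (div_pos_iff_of_pos_right hW).mp (hpos.trans_le hlo)
  rw [hrec i, abs_mul, sum_sub_mul_div_sum_mul _ _ _ hS.ne']
  exact mul_le_mul_of_nonneg_left
    (abs_one_sub_div_le_max hpos hlo hhi (hpos.le.trans (hmono (Fin.zero_le i)))) (abs_nonneg _)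

/-- In the BB coefficient dynamics with 0 < λ_1 ≤ ⋯ ≤ λ_n and d_{k-1} ≠ 0,
one has |d_{k+1}^i| ≤ |d_k^i| · max{λ_i/λ_1 - 1, 1 - λ_i/λ_n} for every i. -/
theorem bb_general_ratio_bound {n : ℕ}
    (lam : Fin (n + 1) → ℝ) (hpos : 0 < lam 0) (hmono : Monotone lam)
    (d : ℕ → Fin (n + 1) → ℝ) (k : ℕ) (hk : 1 ≤ k) (hnz : d (k - 1) ≠ 0)
    (hrec : ∀ i, d (k + 1) i = d k i *
      ((∑ j, (lam j - lam i) * d (k - 1) j ^ 2) / (∑ j, lam j * d (k - 1) j ^ 2))) :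
    ∀ i, |d (k + 1) i| ≤ |d k i| * max (lam i / lam 0 - 1) (1 - lam i / lam (Fin.last n)) :=
  bb_general_ratio_bound_general lam hpos hmono d k hnz hrec
end

section
/- If index i is in the shrinking mode at iteration k-1, i.e., Σ_j (λ_j - λ_i)(d_{k-1}^j)^2 ≥ 0, then |d_{k+1}^i| ≤ (1 - λ_i/λ_n)|d_k^i| ≤ (1 - 1/κ)|d_k^i|, where κ = λ_n/λ_1. -/
/-!
Write `w j = (d_{k-1}^j)²`, `S = Σ λ_j w_j` and `N = Σ (λ_j - λ_i) w_j = S - λ_i Σ w_j`.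
Since every `λ_j ≤ λ_n`, we have `S ≤ λ_n Σ w_j`, hence `λ_n N ≤ (λ_n - λ_i) S`, i.e. the
BB factor `N / S` is at most `1 - λ_i / λ_n`; in the shrinking mode it is also nonnegative,
so it contracts `|d_k^i|`. Finally `λ_i ≥ λ_1` gives `λ_i / λ_n ≥ 1 / κ`.
-/

open Finset

section WeightedRayleigh

variable {ι : Type*} [Fintype ι] {lam w : ι → ℝ} {L : ℝ}

theorem mul_sum_sub_mul_le (hlam : ∀ j, 0 ≤ lam j) (hL : ∀ j, lam j ≤ L)
    (hw : ∀ j, 0 ≤ w j) (i : ι) :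
    L * ∑ j, (lam j - lam i) * w j ≤ (L - lam i) * ∑ j, lam j * w j := by
  have hsum : ∑ j, lam j * w j ≤ L * ∑ j, w j := by
    rw [mul_sum]
    exact sum_le_sum fun j _ => mul_le_mul_of_nonneg_right (hL j) (hw j)
  have hsplit : ∑ j, (lam j - lam i) * w j = ∑ j, lam j * w j - lam i * ∑ j, w j := by
    simp only [sub_mul, sum_sub_distrib, mul_sum]
  rw [hsplit]
  nlinarith [mul_le_mul_of_nonneg_left hsum (hlam i)]

theorem sum_sub_mul_div_sum_mul_le (hlam : ∀ j, 0 ≤ lam j) (hL : ∀ j, lam j ≤ L)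
    (hw : ∀ j, 0 ≤ w j) (hLpos : 0 < L) (i : ι) :
    (∑ j, (lam j - lam i) * w j) / (∑ j, lam j * w j) ≤ 1 - lam i / L := by
  have hS : 0 ≤ ∑ j, lam j * w j := sum_nonneg fun j _ => mul_nonneg (hlam j) (hw j)
  have hfactor : 0 ≤ 1 - lam i / L := sub_nonneg.2 ((div_le_one hLpos).2 (hL i))
  refine div_le_of_le_mul₀ hS hfactor ?_
  rw [one_sub_div hLpos.ne', div_mul_eq_mul_div, le_div_iff₀ hLpos, mul_comm]
  exact mul_sum_sub_mul_le hlam hL hw i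

end WeightedRayleigh

theorem bb_shrinking_mode_contraction_general {n : ℕ}
    (lam : Fin (n + 1) → ℝ) (hpos : 0 < lam 0) (hmono : Monotone lam)
    (κ : ℝ) (hκ : κ = lam (Fin.last n) / lam 0)
    (d : ℕ → Fin (n + 1) → ℝ) (k : ℕ)
    (hrec : ∀ i, d (k + 1) i = d k i *
      ((∑ j, (lam j - lam i) * d (k - 1) j ^ 2) / (∑ j, lam j * d (k - 1) j ^ 2)))
    (i : Fin (n + 1))
    (hshrink : 0 ≤ ∑ j, (lam j - lam i) * d (k - 1) j ^ 2) :
    |d (k + 1) i| ≤ (1 - lam i / lam (Fin.last n)) * |d k i| ∧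
    (1 - lam i / lam (Fin.last n)) * |d k i| ≤ (1 - 1 / κ) * |d k i| := by
  have hlam : ∀ j, 0 ≤ lam j := fun j => hpos.le.trans (hmono (Fin.zero_le j))
  have hL : ∀ j, lam j ≤ lam (Fin.last n) := fun j => hmono (Fin.le_last j)
  have hLpos : 0 < lam (Fin.last n) := hpos.trans_le (hL 0)
  have hfactor := sum_sub_mul_div_sum_mul_le hlam hL (fun j => sq_nonneg (d (k - 1) j)) hLpos i
  refine ⟨?_, mul_le_mul_of_nonneg_right ?_ (abs_nonneg _)⟩
  · rw [hrec i, abs_mul, abs_of_nonneg (div_nonneg hshrink (sum_nonneg fun j _ =>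
      mul_nonneg (hlam j) (sq_nonneg _))), mul_comm]
    exact mul_le_mul_of_nonneg_right hfactor (abs_nonneg _)
  · rw [hκ, one_div_div]
    exact sub_le_sub_left (div_le_div_of_nonneg_right (hmono (Fin.zero_le i)) hLpos.le) 1

/-- If index i is in the shrinking mode at iteration k-1, i.e.
Σ_j (λ_j - λ_i)(d_{k-1}^j)² ≥ 0, then |d_{k+1}^i| ≤ (1 - λ_i/λ_n)|d_k^i| ≤ (1 - 1/κ)|d_k^i|,
where κ = λ_n/λ_1. -/
theorem bb_shrinking_mode_contraction {n : ℕ}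
    (lam : Fin (n + 1) → ℝ) (hpos : 0 < lam 0) (hmono : Monotone lam)
    (κ : ℝ) (hκ : κ = lam (Fin.last n) / lam 0)
    (d : ℕ → Fin (n + 1) → ℝ) (k : ℕ) (hk : 1 ≤ k) (hnz : d (k - 1) ≠ 0)
    (hrec : ∀ i, d (k + 1) i = d k i *
      ((∑ j, (lam j - lam i) * d (k - 1) j ^ 2) / (∑ j, lam j * d (k - 1) j ^ 2)))
    (i : Fin (n + 1))
    (hshrink : 0 ≤ ∑ j, (lam j - lam i) * d (k - 1) j ^ 2) :
    |d (k + 1) i| ≤ (1 - lam i / lam (Fin.last n)) * |d k i| ∧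
    (1 - lam i / lam (Fin.last n)) * |d k i| ≤ (1 - 1 / κ) * |d k i| :=
  bb_shrinking_mode_contraction_general lam hpos hmono κ hκ d k hrec i hshrink
end

section
/- If index i is in the fluctuation mode at iteration k-1, i.e., Σ_j (λ_j - λ_i)(d_{k-1}^j)^2 < 0, and additionally (d_{k-1}^i)^2 ≥ Σ_{j<i} (d_{k-1}^j)^2, then |d_{k+1}^i| ≤ (1 - λ_1/λ_i)|d_k^i| ≤ (1 - 1/κ)|d_k^i|. -/
/-! Split `∑ⱼ (λᵢ - λⱼ) dⱼ²` at `i`: the indices above `i` contribute nothing positive, and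
those below contribute at most `(λᵢ - λ₁) ∑_{j<i} dⱼ² ≤ (λᵢ - λ₁) dᵢ²` by the dominance
hypothesis. Since `λᵢ dᵢ²` is one term of the denominator `∑ⱼ λⱼ dⱼ²`, the step ratio of
the recursion has modulus at most `1 - λ₁/λᵢ`, and `λᵢ ≤ λₙ` bounds this by `1 - 1/κ`. -/

open Finset

section

variable {ι : Type*} [Fintype ι] [LinearOrder ι] [LocallyFiniteOrderBot ι]

theorem sum_sub_mul_le_of_sum_Iio_le {lam w : ι → ℝ} {m : ℝ} (hmono : Monotone lam)
    (hm : ∀ j, m ≤ lam j) (hw : ∀ j, 0 ≤ w j) (i : ι) (hdom : ∑ j ∈ Iio i, w j ≤ w i) :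
    ∑ j, (lam i - lam j) * w j ≤ (lam i - m) * w i := by
  have hlow : ∑ j ∈ Iio i, (lam i - lam j) * w j ≤ (lam i - m) * ∑ j ∈ Iio i, w j := by
    rw [mul_sum]
    exact sum_le_sum fun j _ => mul_le_mul_of_nonneg_right (by linarith [hm j]) (hw j)
  have hhigh : ∑ j ∈ (Iio i)ᶜ, (lam i - lam j) * w j ≤ 0 := by
    refine sum_nonpos fun j hj => mul_nonpos_of_nonpos_of_nonneg ?_ (hw j)
    have hij : i ≤ j := not_lt.mp (by simpa using hj)
    linarith [hmono hij]
  calc ∑ j, (lam i - lam j) * w j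
      = ∑ j ∈ Iio i, (lam i - lam j) * w j + ∑ j ∈ (Iio i)ᶜ, (lam i - lam j) * w j :=
        (sum_add_sum_compl _ _).symm
    _ ≤ (lam i - m) * ∑ j ∈ Iio i, w j := by linarith
    _ ≤ (lam i - m) * w i := mul_le_mul_of_nonneg_left hdom (by linarith [hm i])

theorem abs_div_sum_le_one_sub_div {lam w : ι → ℝ} {m : ℝ} (hmono : Monotone lam)
    (hm_pos : 0 < m) (hm : ∀ j, m ≤ lam j) (hw : ∀ j, 0 ≤ w j) (i : ι)
    (hneg : ∑ j, (lam j - lam i) * w j < 0) (hdom : ∑ j ∈ Iio i, w j ≤ w i) :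
    |(∑ j, (lam j - lam i) * w j) / ∑ j, lam j * w j| ≤ 1 - m / lam i := by
  have hlam_pos : ∀ j, 0 < lam j := fun j => hm_pos.trans_le (hm j)
  have hD : 0 ≤ ∑ j, lam j * w j := sum_nonneg fun j _ => mul_nonneg (hlam_pos j).le (hw j)
  have hc : 0 ≤ 1 - m / lam i := sub_nonneg.mpr ((div_le_one (hlam_pos i)).mpr (hm i))
  have hnum : -∑ j, (lam j - lam i) * w j = ∑ j, (lam i - lam j) * w j := by
    rw [← sum_neg_distrib]; exact sum_congr rfl fun j _ => by ring
  rw [abs_div, abs_of_neg hneg, abs_of_nonneg hD, hnum]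
  refine div_le_of_le_mul₀ hD hc ?_
  calc ∑ j, (lam i - lam j) * w j
      ≤ (lam i - m) * w i := sum_sub_mul_le_of_sum_Iio_le hmono hm hw i hdom
    _ = (1 - m / lam i) * (lam i * w i) := by field_simp [(hlam_pos i).ne']
    _ ≤ (1 - m / lam i) * ∑ j, lam j * w j :=
        mul_le_mul_of_nonneg_left
          (single_le_sum (fun j _ => mul_nonneg (hlam_pos j).le (hw j)) (mem_univ i)) hc

end

theorem bb_fluctuation_mode_contraction_general {n : ℕ}
    (lam : Fin (n + 1) → ℝ) (hpos : 0 < lam 0) (hmono : Monotone lam)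
    (κ : ℝ) (hκ : κ = lam (Fin.last n) / lam 0)
    (d : ℕ → Fin (n + 1) → ℝ) (k : ℕ)
    (hrec : ∀ i, d (k + 1) i = d k i *
      ((∑ j, (lam j - lam i) * d (k - 1) j ^ 2) / (∑ j, lam j * d (k - 1) j ^ 2)))
    (i : Fin (n + 1))
    (hfluct : ∑ j, (lam j - lam i) * d (k - 1) j ^ 2 < 0)
    (hdom : ∑ j ∈ Finset.Iio i, d (k - 1) j ^ 2 ≤ d (k - 1) i ^ 2) :
    |d (k + 1) i| ≤ (1 - lam 0 / lam i) * |d k i| ∧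
    (1 - lam 0 / lam i) * |d k i| ≤ (1 - 1 / κ) * |d k i| := by
  have hmin : ∀ j, lam 0 ≤ lam j := fun j => hmono (Fin.zero_le j)
  have hratio := abs_div_sum_le_one_sub_div hmono hpos hmin (fun j => sq_nonneg (d (k - 1) j))
    i hfluct hdom
  refine ⟨?_, mul_le_mul_of_nonneg_right ?_ (abs_nonneg _)⟩
  · rw [hrec i, abs_mul, mul_comm]
    exact mul_le_mul_of_nonneg_right hratio (abs_nonneg _)
  · have hlast : lam i ≤ lam (Fin.last n) := hmono (Fin.le_last i)
    rw [hκ, one_div_div]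
    gcongr
    exact hpos.trans_le (hmin i)

/-- If index i is in the fluctuation mode at iteration k-1, i.e.
Σ_j (λ_j - λ_i)(d_{k-1}^j)² < 0, and additionally (d_{k-1}^i)² ≥ Σ_{j<i}(d_{k-1}^j)²,
then |d_{k+1}^i| ≤ (1 - λ_1/λ_i)|d_k^i| ≤ (1 - 1/κ)|d_k^i|. -/
theorem bb_fluctuation_mode_contraction {n : ℕ}
    (lam : Fin (n + 1) → ℝ) (hpos : 0 < lam 0) (hmono : Monotone lam)
    (κ : ℝ) (hκ : κ = lam (Fin.last n) / lam 0)
    (d : ℕ → Fin (n + 1) → ℝ) (k : ℕ) (hk : 1 ≤ k) (hnz : d (k - 1) ≠ 0)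
    (hrec : ∀ i, d (k + 1) i = d k i *
      ((∑ j, (lam j - lam i) * d (k - 1) j ^ 2) / (∑ j, lam j * d (k - 1) j ^ 2)))
    (i : Fin (n + 1))
    (hfluct : ∑ j, (lam j - lam i) * d (k - 1) j ^ 2 < 0)
    (hdom : ∑ j ∈ Finset.Iio i, d (k - 1) j ^ 2 ≤ d (k - 1) i ^ 2) :
    |d (k + 1) i| ≤ (1 - lam 0 / lam i) * |d k i| ∧
    (1 - lam 0 / lam i) * |d k i| ≤ (1 - 1 / κ) * |d k i| :=
  bb_fluctuation_mode_contraction_general lam hpos hmono κ hκ d k hrec i hfluct hdom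
end

section
/- The coefficient corresponding to the minimal eigenvalue is always in the shrinking mode: for every k, Σ_j (λ_j - λ_1)(d_k^j)^2 ≥ 0; consequently |d_{k+1}^1| ≤ (1 - 1/κ)|d_k^1| for all k ≥ 1, so |d_k^1| ≤ |d_0^1|(1 - 1/κ)^k for k ≥ 1 (given |d_1^1| ≤ (1-1/κ)|d_0^1| from the first gradient step). -/
/-!
Write `m = λ₁`, `M = λ_n` and `S = Σ x_j²`, `D = Σ λ_j x_j²` for the coefficient vector a step is computed from.
The first-coefficient factor of a BB step is `(D - m S) / D`, which is nonnegative since `m` is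
the least eigenvalue, and is at most `1 - m / M = 1 - 1/κ` because `D ≤ M S`. Hence every step
shrinks `|d^1|` by `1 - 1/κ`, and the bound on `|d_k^1|` is a geometric estimate.
-/

open Finset

namespace BarzilaiBorwein

variable {ι : Type*} [Fintype ι]

/-- The factor by which a BB step multiplies the coefficient of eigenvalue `μ`, computed from
the coefficient vector `x` of the previous iterate. -/
noncomputable def stepFactor (lam : ι → ℝ) (μ : ℝ) (x : ι → ℝ) : ℝ :=
  (∑ j, (lam j - μ) * x j ^ 2) / ∑ j, lam j * x j ^ 2

section Bounds

variable {lam : ι → ℝ} {m M : ℝ}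

theorem sum_sub_mul_sq_nonneg (hlo : ∀ j, m ≤ lam j) (x : ι → ℝ) :
    0 ≤ ∑ j, (lam j - m) * x j ^ 2 :=
  sum_nonneg fun j _ => mul_nonneg (sub_nonneg.mpr (hlo j)) (sq_nonneg _)

theorem sum_mul_sq_le (hhi : ∀ j, lam j ≤ M) (x : ι → ℝ) :
    ∑ j, lam j * x j ^ 2 ≤ M * ∑ j, x j ^ 2 := by
  rw [mul_sum]
  exact sum_le_sum fun j _ => mul_le_mul_of_nonneg_right (hhi j) (sq_nonneg _)

theorem sum_sub_mul_sq_le (hm : 0 < m) (hmM : m ≤ M) (hhi : ∀ j, lam j ≤ M) (x : ι → ℝ) :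
    ∑ j, (lam j - m) * x j ^ 2 ≤ (1 - m / M) * ∑ j, lam j * x j ^ 2 := by
  have hM : 0 < M := hm.trans_le hmM
  have hsplit : ∑ j, (lam j - m) * x j ^ 2 = ∑ j, lam j * x j ^ 2 - m * ∑ j, x j ^ 2 := by
    rw [mul_sum, ← sum_sub_distrib]
    exact sum_congr rfl fun j _ => by ring
  have hscaled : m / M * ∑ j, lam j * x j ^ 2 ≤ m * ∑ j, x j ^ 2 :=
    calc m / M * ∑ j, lam j * x j ^ 2
        ≤ m / M * (M * ∑ j, x j ^ 2) := by gcongr; exact sum_mul_sq_le hhi x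
      _ = m * ∑ j, x j ^ 2 := by field_simp
  rw [hsplit]
  linarith

theorem stepFactor_nonneg (hm : 0 ≤ m) (hlo : ∀ j, m ≤ lam j) (x : ι → ℝ) :
    0 ≤ stepFactor lam m x :=
  div_nonneg (sum_sub_mul_sq_nonneg hlo x)
    (sum_nonneg fun j _ => mul_nonneg (hm.trans (hlo j)) (sq_nonneg _))

theorem stepFactor_le (hm : 0 < m) (hmM : m ≤ M) (hlo : ∀ j, m ≤ lam j)
    (hhi : ∀ j, lam j ≤ M) (x : ι → ℝ) : stepFactor lam m x ≤ 1 - m / M :=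
  div_le_of_le_mul₀ (sum_nonneg fun j _ => mul_nonneg (hm.le.trans (hlo j)) (sq_nonneg _))
    (sub_nonneg.mpr ((div_le_one (hm.trans_le hmM)).mpr hmM))
    (sum_sub_mul_sq_le hm hmM hhi x)

theorem abs_mul_stepFactor_le (hm : 0 < m) (hmM : m ≤ M) (hlo : ∀ j, m ≤ lam j)
    (hhi : ∀ j, lam j ≤ M) (a : ℝ) (x : ι → ℝ) :
    |a * stepFactor lam m x| ≤ (1 - m / M) * |a| := by
  rw [abs_mul, abs_of_nonneg (stepFactor_nonneg hm.le hlo x), mul_comm]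
  exact mul_le_mul_of_nonneg_right (stepFactor_le hm hmM hlo hhi x) (abs_nonneg a)

end Bounds

end BarzilaiBorwein

theorem bb_first_coefficient_always_shrinks_general {n : ℕ}
    (lam : Fin (n + 1) → ℝ) (hpos : 0 < lam 0) (hmono : Monotone lam)
    (κ : ℝ) (hκ : κ = lam (Fin.last n) / lam 0)
    (d : ℕ → Fin (n + 1) → ℝ)
    (hrec : ∀ k, 1 ≤ k → ∀ i, d (k + 1) i = d k i *
      ((∑ j, (lam j - lam i) * d (k - 1) j ^ 2) / (∑ j, lam j * d (k - 1) j ^ 2)))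
    (hfirst : ∀ i, d 1 i = d 0 i *
      ((∑ j, (lam j - lam i) * d 0 j ^ 2) / (∑ j, lam j * d 0 j ^ 2))) :
    (∀ k, 0 ≤ ∑ j, (lam j - lam 0) * d k j ^ 2) ∧
    (∀ k, 1 ≤ k → |d (k + 1) 0| ≤ (1 - 1 / κ) * |d k 0|) ∧
    (∀ k, 1 ≤ k → |d k 0| ≤ |d 0 0| * (1 - 1 / κ) ^ k) := by
  have hlo : ∀ j, lam 0 ≤ lam j := fun j => hmono (Fin.zero_le j)
  have hhi : ∀ j, lam j ≤ lam (Fin.last n) := fun j => hmono (Fin.le_last j)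
  have hinv : 1 / κ = lam 0 / lam (Fin.last n) := by rw [hκ, one_div_div]
  have hstep := BarzilaiBorwein.abs_mul_stepFactor_le hpos (hhi 0) hlo hhi
  have hshrink : ∀ k, |d (k + 1) 0| ≤ (1 - 1 / κ) * |d k 0| := by
    rintro (_ | k)
    · rw [hfirst, hinv]; exact hstep _ _
    · rw [hrec (k + 1) k.succ_pos 0, hinv]; exact hstep _ _
  have hrate : 0 ≤ 1 - 1 / κ := by
    rw [hinv, sub_nonneg]; exact (div_le_one (hpos.trans_le (hhi 0))).mpr (hhi 0)
  refine ⟨fun k => BarzilaiBorwein.sum_sub_mul_sq_nonneg hlo (d k), fun k _ => hshrink k, fun k _ => ?_⟩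
  rw [mul_comm]
  exact le_geom (u := fun k => |d k 0|) hrate k fun k _ => hshrink k

/-- The coefficient corresponding to the minimal eigenvalue is always in the
shrinking mode, hence |d_{k+1}^1| ≤ (1 - 1/κ)|d_k^1| for all k ≥ 1 and
|d_k^1| ≤ |d_0^1|(1 - 1/κ)^k for k ≥ 1. -/
theorem bb_first_coefficient_always_shrinks {n : ℕ}
    (lam : Fin (n + 1) → ℝ) (hpos : 0 < lam 0) (hmono : Monotone lam)
    (κ : ℝ) (hκ : κ = lam (Fin.last n) / lam 0)
    (d : ℕ → Fin (n + 1) → ℝ)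
    (hrec : ∀ k, 1 ≤ k → ∀ i, d (k + 1) i = d k i *
      ((∑ j, (lam j - lam i) * d (k - 1) j ^ 2) / (∑ j, lam j * d (k - 1) j ^ 2)))
    (hfirst : ∀ i, d 1 i = d 0 i *
      ((∑ j, (lam j - lam i) * d 0 j ^ 2) / (∑ j, lam j * d 0 j ^ 2)))
    (hnz : ∀ k, d k ≠ 0) :
    (∀ k, 0 ≤ ∑ j, (lam j - lam 0) * d k j ^ 2) ∧
    (∀ k, 1 ≤ k → |d (k + 1) 0| ≤ (1 - 1 / κ) * |d k 0|) ∧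
    (∀ k, 1 ≤ k → |d k 0| ≤ |d 0 0| * (1 - 1 / κ) ^ k) :=
  bb_first_coefficient_always_shrinks_general lam hpos hmono κ hκ d hrec hfirst
end

section
/- (Main theorem) For the BB method on a strongly convex quadratic with condition number κ = λ_n/λ_1, each coefficient sequence satisfies |d_k^i| ≤ F_i θ^k for all k ≥ 1, where θ = 1 - 1/κ and F_i is defined recursively by F_1 = |d_0^1| and F_i = max{|d_0^i|, |d_1^i|/θ, θ^{-2} C^2 sqrt(Σ_{j<i} F_j^2)} with C = max{λ_i/λ_1 - 1, 1 - λ_i/λ_n}. Hence the BB method converges R-linearly with rate 1 - 1/κ. -/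
/-!
Write `d_{k+1}^i = d_k^i r_i(d_{k-1})` with `r_i(w) = Σ_j (λ_j - λ_i) w_j² / Σ_j λ_j w_j²`.
Termwise `|λ_j - λ_i| ≤ C_i λ_j`, so `|r_i| ≤ C_i`. Splitting the numerator at `i`, the terms
with `j ≥ i` lie in `[0, θ λ_j w_j²]` and those with `j < i` in `[-(λ_i - λ_1) w_j², 0]`; hence
either `|r_i| ≤ θ`, or `|r_i| w_i² ≤ C_i Σ_{j<i} w_j²`. In the second case
`(|w_i| |r_i|)² = |r_i| (|r_i| w_i²) ≤ C_i² Σ_{j<i} w_j²`, so with `w = d_{k-1}` and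
`|d_k^i| ≤ C_i |d_{k-1}^i|` we get `|d_{k+1}^i| ≤ C_i² (Σ_{j<i} (d_{k-1}^j)²)^{1/2}`.
Either way the bound `F_i θ^{k+1}` follows by induction on `i` and then on `k`.
-/

open Finset

lemma abs_sub_le_max_mul {a b μ x : ℝ} (ha : 0 < a) (hμ : 0 ≤ μ) (hx : x ∈ Set.Icc a b) :
    |x - μ| ≤ max (μ / a - 1) (1 - μ / b) * x := by
  obtain ⟨hax, hxb⟩ := hx
  have hb : 0 < b := ha.trans_le (hax.trans hxb)
  have hpa : μ / a * a = μ := div_mul_cancel₀ μ ha.ne'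
  have hqb : μ / b * b = μ := div_mul_cancel₀ μ hb.ne'
  have hp : 0 ≤ μ / a := div_nonneg hμ ha.le
  have hq : 0 ≤ μ / b := div_nonneg hμ hb.le
  rw [abs_le]
  constructor
  · nlinarith [le_max_left (μ / a - 1) (1 - μ / b), mul_le_mul_of_nonneg_left hax hp]
  · nlinarith [le_max_right (μ / a - 1) (1 - μ / b), mul_le_mul_of_nonneg_left hxb hq]

lemma abs_sum_sub_mul_le_max {ι : Type*} [Fintype ι] [LinearOrder ι] [LocallyFiniteOrderBot ι]
    {lam v : ι → ℝ} {a b : ℝ} (ha : 0 ≤ a) (hlam : ∀ j, lam j ∈ Set.Icc a b)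
    (hmono : Monotone lam) (hv : ∀ j, 0 ≤ v j) (i : ι) :
    |∑ j, (lam j - lam i) * v j| ≤
      max ((1 - a / b) * ∑ j, lam j * v j) ((lam i - a) * ∑ j ∈ Iio i, v j) := by
  rw [← sum_add_sum_compl (Iio i)]
  have hbelow : ∀ j ∈ Iio i, -((lam i - a) * v j) ≤ (lam j - lam i) * v j ∧
      (lam j - lam i) * v j ≤ 0 := by
    intro j hj
    have hji : lam j ≤ lam i := hmono (mem_Iio.mp hj).le
    constructor <;> nlinarith [(hlam j).1, hv j]
  have habove : ∀ j ∈ (Iio i)ᶜ, 0 ≤ (lam j - lam i) * v j ∧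
      (lam j - lam i) * v j ≤ (1 - a / b) * (lam j * v j) := by
    intro j hj
    have hij : lam i ≤ lam j := hmono (not_lt.mp (mem_compl.mp hj ∘ mem_Iio.mpr))
    obtain ⟨haj, hjb⟩ := hlam j
    have hab : a / b * lam j ≤ a := by
      rcases (ha.trans (haj.trans hjb)).eq_or_lt with hb | hb
      · simp [← hb, ha]
      · rw [div_mul_eq_mul_div, div_le_iff₀ hb]; exact mul_le_mul_of_nonneg_left hjb ha
    constructor <;> nlinarith [(hlam i).1, hv j]
  have hθ : 0 ≤ 1 - a / b := sub_nonneg.mpr (div_le_one_of_le₀ ((hlam i).1.trans (hlam i).2)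
    (ha.trans ((hlam i).1.trans (hlam i).2)))
  have hL := sum_le_sum fun j hj => (hbelow j hj).1
  have hL' := sum_nonpos fun j hj => (hbelow j hj).2
  have hR := sum_nonneg fun j hj => (habove j hj).1
  have hR' := sum_le_sum fun j hj => (habove j hj).2
  have hsub : ∑ j ∈ (Iio i)ᶜ, lam j * v j ≤ ∑ j, lam j * v j :=
    sum_le_sum_of_subset_of_nonneg (subset_univ _) fun j _ _ =>
      mul_nonneg (ha.trans (hlam j).1) (hv j)
  rw [sum_neg_distrib, ← mul_sum] at hL
  rw [← mul_sum] at hR'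
  rw [abs_le]
  constructor
  · nlinarith [le_max_right ((1 - a / b) * ∑ j, lam j * v j) ((lam i - a) * ∑ j ∈ Iio i, v j)]
  · nlinarith [le_max_left ((1 - a / b) * ∑ j, lam j * v j) ((lam i - a) * ∑ j ∈ Iio i, v j)]

lemma mul_le_mul_sqrt_of_mul_sq_le {x r c G : ℝ} (hx : 0 ≤ x) (hr : 0 ≤ r) (hrc : r ≤ c)
    (hG : r * x ^ 2 ≤ c * G) : x * r ≤ c * √G := by
  have hsq : (x * r) ^ 2 ≤ c ^ 2 * G := by
    calc (x * r) ^ 2 = r * (r * x ^ 2) := by ring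
      _ ≤ c * (c * G) := mul_le_mul hrc hG (by positivity) (hr.trans hrc)
      _ = c ^ 2 * G := by ring
  calc x * r = √((x * r) ^ 2) := (Real.sqrt_sq (mul_nonneg hx hr)).symm
    _ ≤ √(c ^ 2 * G) := Real.sqrt_le_sqrt hsq
    _ = c * √G := by rw [Real.sqrt_mul (sq_nonneg c), Real.sqrt_sq (hr.trans hrc)]

lemma abs_le_mul_pow_of_step_or {ι : Type*} [Preorder ι] [LocallyFiniteOrderBot ι]
    [WellFoundedLT ι] {d : ℕ → ι → ℝ} {F c : ι → ℝ} {θ : ℝ} (hθ : 0 < θ)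
    (h0 : ∀ i, |d 0 i| ≤ F i) (h1 : ∀ i, |d 1 i| ≤ F i * θ)
    (hstep : ∀ k i, |d (k + 2) i| ≤ θ * |d (k + 1) i| ∨
      |d (k + 2) i| ≤ c i ^ 2 * √(∑ j ∈ Iio i, d k j ^ 2))
    (hF : ∀ i, c i ^ 2 / θ ^ 2 * √(∑ j ∈ Iio i, F j ^ 2) ≤ F i) (k : ℕ) (i : ι) :
    |d k i| ≤ F i * θ ^ k := by
  induction i using WellFoundedLT.induction generalizing k with
  | _ i ih =>
  induction k using Nat.twoStepInduction with
  | zero => simpa using h0 i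
  | one => simpa using h1 i
  | more k _ hk1 =>
    rcases hstep k i with h | h
    · calc |d (k + 2) i| ≤ θ * (F i * θ ^ (k + 1)) := h.trans (by gcongr)
        _ = F i * θ ^ (k + 2) := by ring
    · set S := ∑ j ∈ Iio i, F j ^ 2
      have hS : √(∑ j ∈ Iio i, d k j ^ 2) ≤ √S * θ ^ k := by
        rw [Real.sqrt_le_iff, mul_pow, Real.sq_sqrt (sum_nonneg fun j _ => sq_nonneg (F j)),
          sum_mul]
        refine ⟨by positivity, sum_le_sum fun j hj => ?_⟩
        rw [← mul_pow, ← sq_abs]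
        exact pow_le_pow_left₀ (abs_nonneg _) (ih j (mem_Iio.mp hj) k) 2
      calc |d (k + 2) i| ≤ c i ^ 2 * (√S * θ ^ k) := h.trans (by gcongr)
        _ = c i ^ 2 / θ ^ 2 * √S * θ ^ (k + 2) := by field_simp; ring
        _ ≤ F i * θ ^ (k + 2) := by gcongr; exact hF i

section BBFactor

variable {ι : Type*} [Fintype ι] {lam : ι → ℝ} {a b : ℝ}

noncomputable def bbFactor (lam w : ι → ℝ) (i : ι) : ℝ :=
  (∑ j, (lam j - lam i) * w j ^ 2) / ∑ j, lam j * w j ^ 2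

lemma abs_bbFactor_le (ha : 0 < a) (hlam : ∀ j, lam j ∈ Set.Icc a b) (w : ι → ℝ) (i : ι) :
    |bbFactor lam w i| ≤ max (lam i / a - 1) (1 - lam i / b) := by
  set c := max (lam i / a - 1) (1 - lam i / b)
  have hc : 0 ≤ c := le_max_of_le_left (sub_nonneg.mpr ((one_le_div ha).mpr (hlam i).1))
  have hD : 0 ≤ ∑ j, lam j * w j ^ 2 :=
    sum_nonneg fun j _ => mul_nonneg (ha.le.trans (hlam j).1) (sq_nonneg _)
  rw [bbFactor, abs_div, abs_of_nonneg hD]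
  refine div_le_of_le_mul₀ hD hc ?_
  calc |∑ j, (lam j - lam i) * w j ^ 2| ≤ ∑ j, |lam j - lam i| * w j ^ 2 :=
        (abs_sum_le_sum_abs _ _).trans_eq
          (sum_congr rfl fun j _ => by rw [abs_mul, abs_of_nonneg (sq_nonneg (w j))])
    _ ≤ ∑ j, c * lam j * w j ^ 2 :=
        sum_le_sum fun j _ => mul_le_mul_of_nonneg_right
          (abs_sub_le_max_mul ha (ha.le.trans (hlam i).1) (hlam j)) (sq_nonneg _)
    _ = c * ∑ j, lam j * w j ^ 2 := by simp only [mul_sum, mul_assoc]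

lemma abs_bbFactor_le_or [LinearOrder ι] [LocallyFiniteOrderBot ι] (ha : 0 < a)
    (hlam : ∀ j, lam j ∈ Set.Icc a b) (hmono : Monotone lam) (w : ι → ℝ) (i : ι) :
    |bbFactor lam w i| ≤ 1 - a / b ∨
      |bbFactor lam w i| * w i ^ 2 ≤ (lam i / a - 1) * ∑ j ∈ Iio i, w j ^ 2 := by
  set N := ∑ j, (lam j - lam i) * w j ^ 2
  set D := ∑ j, lam j * w j ^ 2
  have hD : a * w i ^ 2 ≤ D :=
    (mul_le_mul_of_nonneg_right (hlam i).1 (sq_nonneg _)).trans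
      (single_le_sum (f := fun j => lam j * w j ^ 2)
        (fun j _ => mul_nonneg (ha.le.trans (hlam j).1) (sq_nonneg _)) (mem_univ i))
  have hD0 : 0 ≤ D := (mul_nonneg ha.le (sq_nonneg _)).trans hD
  have hθ : 0 ≤ 1 - a / b := sub_nonneg.mpr (div_le_one_of_le₀ ((hlam i).1.trans (hlam i).2)
    (ha.le.trans ((hlam i).1.trans (hlam i).2)))
  have hND : |N| / D * D ≤ |N| := by
    rcases hD0.eq_or_lt with h | h
    · simp [← h]
    · rw [div_mul_cancel₀ _ h.ne']
  rw [bbFactor, abs_div, abs_of_nonneg hD0]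
  rcases le_max_iff.mp (abs_sum_sub_mul_le_max ha.le hlam hmono (fun j => sq_nonneg (w j)) i)
    with h | h
  · exact .inl (div_le_of_le_mul₀ hD0 hθ h)
  · refine .inr (le_of_mul_le_mul_left ?_ ha)
    calc a * (|N| / D * w i ^ 2) = |N| / D * (a * w i ^ 2) := by ring
      _ ≤ |N| / D * D := by gcongr
      _ ≤ (lam i - a) * ∑ j ∈ Iio i, w j ^ 2 := hND.trans h
      _ = a * ((lam i / a - 1) * ∑ j ∈ Iio i, w j ^ 2) := by field_simp

lemma abs_mul_bbFactor_le_or [LinearOrder ι] [LocallyFiniteOrderBot ι] (ha : 0 < a)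
    (hlam : ∀ j, lam j ∈ Set.Icc a b) (hmono : Monotone lam) {w : ι → ℝ} {i : ι} {y : ℝ}
    (hy : |y| ≤ max (lam i / a - 1) (1 - lam i / b) * |w i|) :
    |y * bbFactor lam w i| ≤ (1 - a / b) * |y| ∨
      |y * bbFactor lam w i| ≤
        max (lam i / a - 1) (1 - lam i / b) ^ 2 * √(∑ j ∈ Iio i, w j ^ 2) := by
  set c := max (lam i / a - 1) (1 - lam i / b)
  have hc : |bbFactor lam w i| ≤ c := abs_bbFactor_le ha hlam w i
  rw [abs_mul]
  rcases abs_bbFactor_le_or ha hlam hmono w i with h | h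
  · exact .inl (by rw [mul_comm]; gcongr)
  · have hG : |bbFactor lam w i| * |w i| ^ 2 ≤ c * ∑ j ∈ Iio i, w j ^ 2 := by
      rw [sq_abs]
      exact h.trans (by gcongr; exact le_max_left _ _)
    refine .inr ?_
    calc |y| * |bbFactor lam w i| ≤ c * (|w i| * |bbFactor lam w i|) := by
          rw [← mul_assoc]; gcongr
      _ ≤ c * (c * √(∑ j ∈ Iio i, w j ^ 2)) :=
          mul_le_mul_of_nonneg_left
            (mul_le_mul_sqrt_of_mul_sq_le (abs_nonneg _) (abs_nonneg _) hc hG)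
            ((abs_nonneg _).trans hc)
      _ = c ^ 2 * √(∑ j ∈ Iio i, w j ^ 2) := by ring

lemma abs_succ_le_of_bbStep (ha : 0 < a) (hlam : ∀ j, lam j ∈ Set.Icc a b)
    {d : ℕ → ι → ℝ} (hstep : ∀ k i, d (k + 1) i = d k i * bbFactor lam (d (k - 1)) i)
    (k : ℕ) (i : ι) : |d (k + 1) i| ≤ max (lam i / a - 1) (1 - lam i / b) * |d k i| := by
  rw [hstep, abs_mul, mul_comm]
  exact mul_le_mul_of_nonneg_right (abs_bbFactor_le ha hlam _ i) (abs_nonneg _)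

theorem abs_le_mul_pow_of_bbStep [LinearOrder ι] [LocallyFiniteOrderBot ι] (ha : 0 < a)
    (hlam : ∀ j, lam j ∈ Set.Icc a b) (hmono : Monotone lam) {d : ℕ → ι → ℝ}
    (hstep : ∀ k i, d (k + 1) i = d k i * bbFactor lam (d (k - 1)) i) (hθ : 0 < 1 - a / b)
    {F : ι → ℝ} (h0 : ∀ i, |d 0 i| ≤ F i) (h1 : ∀ i, |d 1 i| ≤ F i * (1 - a / b))
    (hF : ∀ i, max (lam i / a - 1) (1 - lam i / b) ^ 2 / (1 - a / b) ^ 2 *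
      √(∑ j ∈ Iio i, F j ^ 2) ≤ F i) (k : ℕ) (i : ι) :
    |d k i| ≤ F i * (1 - a / b) ^ k :=
  abs_le_mul_pow_of_step_or hθ h0 h1 (fun k i => by
    rw [hstep (k + 1), Nat.add_sub_cancel]
    exact abs_mul_bbFactor_le_or ha hlam hmono (abs_succ_le_of_bbStep ha hlam hstep k i)) hF k i

end BBFactor

theorem bb_r_linear_convergence_general {n : ℕ}
    (lam : Fin (n + 1) → ℝ) (hpos : 0 < lam 0) (hmono : Monotone lam)
    (κ θ : ℝ) (hκ : κ = lam (Fin.last n) / lam 0) (hθ : θ = 1 - 1 / κ)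
    (d : ℕ → Fin (n + 1) → ℝ)
    (hrec : ∀ k, 1 ≤ k → ∀ i, d (k + 1) i = d k i *
      ((∑ j, (lam j - lam i) * d (k - 1) j ^ 2) / (∑ j, lam j * d (k - 1) j ^ 2)))
    (hfirst : ∀ i, d 1 i = d 0 i *
      ((∑ j, (lam j - lam i) * d 0 j ^ 2) / (∑ j, lam j * d 0 j ^ 2)))
    (F : Fin (n + 1) → ℝ)
    (hF0 : F 0 = |d 0 0|)
    (hFi : ∀ i : Fin (n + 1), i ≠ 0 → F i =
      max (|d 0 i|) (max (|d 1 i| / θ)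
        ((max (lam i / lam 0 - 1) (1 - lam i / lam (Fin.last n))) ^ 2 / θ ^ 2 *
          Real.sqrt (∑ j ∈ Finset.Iio i, F j ^ 2)))) :
    ∀ k, 1 ≤ k → ∀ i, |d k i| ≤ F i * θ ^ k := by
  have hlam : ∀ j, lam j ∈ Set.Icc (lam 0) (lam (Fin.last n)) :=
    fun j => ⟨hmono (Fin.zero_le j), hmono (Fin.le_last j)⟩
  have hθ : θ = 1 - lam 0 / lam (Fin.last n) := by rw [hθ, hκ, one_div_div]
  -- at `k = 0` the truncated `k - 1` is `0`, which is exactly the first step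
  have hstep : ∀ k i, d (k + 1) i = d k i * bbFactor lam (d (k - 1)) i := by
    rintro (_ | k) i
    exacts [hfirst i, hrec (k + 1) k.succ_pos i]
  have hθ_nonneg : 0 ≤ θ :=
    hθ ▸ sub_nonneg.mpr (div_le_one_of_le₀ (hlam 0).2 (hpos.le.trans (hlam 0).2))
  rcases hθ_nonneg.eq_or_lt with hθ0 | hθpos
  -- `θ = 0` forces a single eigenvalue, so every factor `r_i` vanishes
  · have hN : lam 0 = lam (Fin.last n) := by
      rwa [hθ, eq_comm, sub_eq_zero, eq_comm, div_eq_one_iff_eq (hpos.trans_le (hlam 0).2).ne']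
        at hθ0
    rintro (_ | k) hk i
    · omega
    · simpa [← hθ0, le_antisymm (hN ▸ (hlam i).2) (hlam i).1, ← hN, hpos.ne'] using
        abs_succ_le_of_bbStep hpos hlam hstep k i
  · intro k _ i
    rw [hθ] at hθpos hFi ⊢
    refine abs_le_mul_pow_of_bbStep hpos hlam hmono hstep hθpos (fun i => ?_) (fun i => ?_)
      (fun i => ?_) k i
    · rcases eq_or_ne i 0 with rfl | hi
      · exact hF0.ge
      · exact (hFi i hi).ge.trans' (le_max_left _ _)
    · rcases eq_or_ne i 0 with rfl | hi
      · simpa [hF0, mul_comm, hpos.ne', hθpos.le] using abs_succ_le_of_bbStep hpos hlam hstep 0 0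
      · rw [hFi i hi, ← div_le_iff₀ hθpos]
        exact le_max_of_le_right (le_max_left _ _)
    · rcases eq_or_ne i 0 with rfl | hi
      · simp [hF0, show Iio (0 : Fin (n + 1)) = ∅ from Iio_bot]
      · exact (hFi i hi).ge.trans' (le_max_of_le_right (le_max_right _ _))

/-- Main theorem: For the BB method on a strongly convex quadratic with
condition number κ = λ_n/λ_1, each coefficient sequence satisfies |d_k^i| ≤ F_i θ^k for
all k ≥ 1, where θ = 1 - 1/κ and F_i is defined recursively by F_1 = |d_0^1| and
F_i = max{|d_0^i|, |d_1^i|/θ, θ⁻² C² √(Σ_{j<i} F_j²)} with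
C = max{λ_i/λ_1 - 1, 1 - λ_i/λ_n}. Hence the BB method converges R-linearly with
rate 1 - 1/κ. -/
theorem bb_r_linear_convergence {n : ℕ}
    (lam : Fin (n + 1) → ℝ) (hpos : 0 < lam 0) (hmono : Monotone lam)
    (κ θ : ℝ) (hκ : κ = lam (Fin.last n) / lam 0) (hθ : θ = 1 - 1 / κ)
    (d : ℕ → Fin (n + 1) → ℝ)
    (hrec : ∀ k, 1 ≤ k → ∀ i, d (k + 1) i = d k i *
      ((∑ j, (lam j - lam i) * d (k - 1) j ^ 2) / (∑ j, lam j * d (k - 1) j ^ 2)))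
    (hfirst : ∀ i, d 1 i = d 0 i *
      ((∑ j, (lam j - lam i) * d 0 j ^ 2) / (∑ j, lam j * d 0 j ^ 2)))
    (hnz : ∀ k, d k ≠ 0)
    (F : Fin (n + 1) → ℝ)
    (hF0 : F 0 = |d 0 0|)
    (hFi : ∀ i : Fin (n + 1), i ≠ 0 → F i =
      max (|d 0 i|) (max (|d 1 i| / θ)
        ((max (lam i / lam 0 - 1) (1 - lam i / lam (Fin.last n))) ^ 2 / θ ^ 2 *
          Real.sqrt (∑ j ∈ Finset.Iio i, F j ^ 2)))) :
    ∀ k, 1 ≤ k → ∀ i, |d k i| ≤ F i * θ ^ k :=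
  bb_r_linear_convergence_general lam hpos hmono κ θ hκ hθ d hrec hfirst F hF0 hFi
end

section
/- Shrink-or-large dichotomy: for any i and k, either (i) Σ_j (λ_j - λ_i)(d_{k-1}^j)^2 ≥ 0 or (ii) Σ_j (λ_j - λ_i)(d_{k-1}^j)^2 < 0 together with Σ_{j<i}(λ_i - λ_j)(d_{k-1}^j)^2 > Σ_{j>i}(λ_j - λ_i)(d_{k-1}^j)^2; in case (ii), if moreover (d_{k-1}^i)^2 < Σ_{j<i}(d_{k-1}^j)^2 fails, then |d_{k+1}^i| ≤ (1-1/κ)|d_k^i|. -/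
/-!
Write `w j = (d_{k-1}^j)²` and `S = Σ_j (λ_j - λ_i) w_j`. Splitting the sum at `i` gives
`S = A - B` with `A = Σ_{j>i} (λ_j - λ_i) w_j ≥ 0` and `B = Σ_{j<i} (λ_i - λ_j) w_j`, so `S < 0`
is the same as `A < B`. If moreover `Σ_{j<i} w_j ≤ w_i`, then
`|S| ≤ B ≤ (λ_i - λ_1) Σ_{j<i} w_j ≤ (λ_i - λ_1) w_i`, while the denominator of the BB step is at
least `λ_i w_i`; hence the factor `|S| / Σ_j λ_j w_j` is at most `1 - λ_1/λ_i ≤ 1 - 1/κ`.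
-/

open Finset

section SplitAtIndex

variable {ι : Type*} [Fintype ι] [LinearOrder ι] [LocallyFiniteOrderTop ι]
  [LocallyFiniteOrderBot ι]

theorem Finset.sum_eq_add_sum_Ioi_add_sum_Iio {M : Type*} [AddCommMonoid M] (f : ι → M) (i : ι) :
    ∑ j, f j = f i + (∑ j ∈ Ioi i, f j + ∑ j ∈ Iio i, f j) := by
  rw [Fintype.sum_eq_add_sum_compl i, ← Ioi_disjUnion_Iio, sum_disjUnion]

theorem sum_sub_mul_eq_sum_Ioi_sub_sum_Iio (lam w : ι → ℝ) (i : ι) :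
    ∑ j, (lam j - lam i) * w j =
      ∑ j ∈ Ioi i, (lam j - lam i) * w j - ∑ j ∈ Iio i, (lam i - lam j) * w j := by
  rw [sum_eq_add_sum_Ioi_add_sum_Iio, sub_self, zero_mul, zero_add, sub_eq_add_neg,
    ← sum_neg_distrib]
  congr 1
  exact sum_congr rfl fun j _ => by ring

variable {lam w : ι → ℝ} {i : ι}

theorem neg_sum_sub_mul_le {m : ℝ} (hm : ∀ j, m ≤ lam j) (hmono : Monotone lam)
    (hw : ∀ j, 0 ≤ w j) (hle : ∑ j ∈ Iio i, w j ≤ w i) :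
    -∑ j, (lam j - lam i) * w j ≤ (lam i - m) * w i := by
  have above_nonneg : 0 ≤ ∑ j ∈ Ioi i, (lam j - lam i) * w j :=
    sum_nonneg fun j hj => mul_nonneg (sub_nonneg.2 (hmono (mem_Ioi.1 hj).le)) (hw j)
  have below_le : ∑ j ∈ Iio i, (lam i - lam j) * w j ≤ (lam i - m) * w i :=
    calc ∑ j ∈ Iio i, (lam i - lam j) * w j
        ≤ ∑ j ∈ Iio i, (lam i - m) * w j :=
          sum_le_sum fun j _ => mul_le_mul_of_nonneg_right (sub_le_sub_left (hm j) _) (hw j)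
      _ = (lam i - m) * ∑ j ∈ Iio i, w j := (mul_sum ..).symm
      _ ≤ (lam i - m) * w i := mul_le_mul_of_nonneg_left hle (sub_nonneg.2 (hm i))
  rw [sum_sub_mul_eq_sum_Ioi_sub_sum_Iio]
  linarith

theorem abs_sum_sub_mul_div_sum_mul_le {m M : ℝ} (hm_pos : 0 < m) (hm : ∀ j, m ≤ lam j)
    (hM : ∀ j, lam j ≤ M) (hmono : Monotone lam) (hw : ∀ j, 0 ≤ w j)
    (hneg : ∑ j, (lam j - lam i) * w j < 0) (hle : ∑ j ∈ Iio i, w j ≤ w i) :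
    |(∑ j, (lam j - lam i) * w j) / ∑ j, lam j * w j| ≤ 1 - m / M := by
  set S := ∑ j, (lam j - lam i) * w j
  have hlam_i : 0 < lam i := hm_pos.trans_le (hm i)
  have hS : -S ≤ (lam i - m) * w i := neg_sum_sub_mul_le hm hmono hw hle
  have hw_i : 0 < w i := by
    by_contra! h
    nlinarith [hw i, hm i]
  have hT : lam i * w i ≤ ∑ j, lam j * w j :=
    single_le_sum (f := fun j => lam j * w j)
      (fun j _ => mul_nonneg (hm_pos.trans_le (hm j)).le (hw j)) (mem_univ i)
  have hp : 0 < lam i * w i := mul_pos hlam_i hw_i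
  calc |S / ∑ j, lam j * w j|
      = -S / ∑ j, lam j * w j := by rw [abs_div, abs_of_neg hneg, abs_of_pos (hp.trans_le hT)]
    _ ≤ -S / (lam i * w i) := div_le_div_of_nonneg_left (by linarith) hp hT
    _ ≤ (lam i - m) * w i / (lam i * w i) := by gcongr
    _ = 1 - m / lam i := by field_simp
    _ ≤ 1 - m / M := by gcongr; exact hM i

end SplitAtIndex

theorem bb_shrink_or_large_dichotomy_general {n : ℕ}
    (lam : Fin (n + 1) → ℝ) (hpos : 0 < lam 0) (hmono : Monotone lam)
    (κ : ℝ) (hκ : κ = lam (Fin.last n) / lam 0)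
    (d : ℕ → Fin (n + 1) → ℝ) (k : ℕ)
    (hrec : ∀ i, d (k + 1) i = d k i *
      ((∑ j, (lam j - lam i) * d (k - 1) j ^ 2) / (∑ j, lam j * d (k - 1) j ^ 2)))
    (i : Fin (n + 1)) :
    (0 ≤ ∑ j, (lam j - lam i) * d (k - 1) j ^ 2 ∨
      ((∑ j, (lam j - lam i) * d (k - 1) j ^ 2) < 0 ∧
        ∑ j ∈ Finset.Ioi i, (lam j - lam i) * d (k - 1) j ^ 2 <
          ∑ j ∈ Finset.Iio i, (lam i - lam j) * d (k - 1) j ^ 2)) ∧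
    ((∑ j, (lam j - lam i) * d (k - 1) j ^ 2) < 0 →
      ∑ j ∈ Finset.Iio i, d (k - 1) j ^ 2 ≤ d (k - 1) i ^ 2 →
      |d (k + 1) i| ≤ (1 - 1 / κ) * |d k i|) := by
  refine ⟨?_, fun hneg hle => ?_⟩
  · rcases le_or_gt 0 (∑ j, (lam j - lam i) * d (k - 1) j ^ 2) with h | h
    · exact Or.inl h
    · have split := sum_sub_mul_eq_sum_Ioi_sub_sum_Iio lam (fun j => d (k - 1) j ^ 2) i
      exact Or.inr ⟨h, by linarith⟩
  · have factor_le := abs_sum_sub_mul_div_sum_mul_le hpos (fun j => hmono (Fin.zero_le j))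
      (fun j => hmono (Fin.le_last j)) hmono (fun j => sq_nonneg (d (k - 1) j)) hneg hle
    rw [hrec i, abs_mul, mul_comm, hκ, one_div_div]
    exact mul_le_mul_of_nonneg_right factor_le (abs_nonneg _)

/-- Shrink-or-large dichotomy: for any i and k, either the shrinking mode
condition Σ_j (λ_j - λ_i)(d_{k-1}^j)² ≥ 0 holds, or it is negative together with
Σ_{j<i}(λ_i - λ_j)(d_{k-1}^j)² > Σ_{j>i}(λ_j - λ_i)(d_{k-1}^j)²; and in the latter case,
if moreover (d_{k-1}^i)² ≥ Σ_{j<i}(d_{k-1}^j)², then |d_{k+1}^i| ≤ (1-1/κ)|d_k^i|. -/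
theorem bb_shrink_or_large_dichotomy {n : ℕ}
    (lam : Fin (n + 1) → ℝ) (hpos : 0 < lam 0) (hmono : Monotone lam)
    (κ : ℝ) (hκ : κ = lam (Fin.last n) / lam 0)
    (d : ℕ → Fin (n + 1) → ℝ) (k : ℕ) (hk : 1 ≤ k) (hnz : d (k - 1) ≠ 0)
    (hrec : ∀ i, d (k + 1) i = d k i *
      ((∑ j, (lam j - lam i) * d (k - 1) j ^ 2) / (∑ j, lam j * d (k - 1) j ^ 2)))
    (i : Fin (n + 1)) :
    (0 ≤ ∑ j, (lam j - lam i) * d (k - 1) j ^ 2 ∨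
      ((∑ j, (lam j - lam i) * d (k - 1) j ^ 2) < 0 ∧
        ∑ j ∈ Finset.Ioi i, (lam j - lam i) * d (k - 1) j ^ 2 <
          ∑ j ∈ Finset.Iio i, (lam i - lam j) * d (k - 1) j ^ 2)) ∧
    ((∑ j, (lam j - lam i) * d (k - 1) j ^ 2) < 0 →
      ∑ j ∈ Finset.Iio i, d (k - 1) j ^ 2 ≤ d (k - 1) i ^ 2 →
      |d (k + 1) i| ≤ (1 - 1 / κ) * |d k i|) :=
  bb_shrink_or_large_dichotomy_general lam hpos hmono κ hκ d k hrec i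
end

section
/- Ratio bound in fluctuation mode with dominant coefficient: if Σ_j (λ_j - λ_i)(d_{k-1}^j)^2 < 0 and (d_{k-1}^i)^2 ≥ Σ_{j<i}(d_{k-1}^j)^2, then |Σ_j (λ_j - λ_i)(d_{k-1}^j)^2| / (Σ_j λ_j (d_{k-1}^j)^2) ≤ 1 - λ_1/λ_i. -/
/-!
Split the spectrum at `λ_i`. Indices `j ≥ i` contribute nonpositively to `∑ (λ_i - λ_j) d_j²`
and indices `j < i` at most `λ_i - λ_1` times their weight, so the numerator is at most
`(λ_i - λ_1) ∑_{j<i} d_j²`. The denominator is at least its `i`-th term `λ_i d_i²`, which by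
dominance is at least `λ_i ∑_{j<i} d_j²`.
-/

open Finset

theorem sum_sub_mul_le_mul_sum_Iio {ι : Type*} [Fintype ι] [LinearOrder ι]
    [LocallyFiniteOrderBot ι] {lam w : ι → ℝ} {m : ℝ} (hmono : Monotone lam)
    (hm : ∀ j, m ≤ lam j) (hw : ∀ j, 0 ≤ w j) (i : ι) :
    ∑ j, (lam i - lam j) * w j ≤ (lam i - m) * ∑ j ∈ Iio i, w j := by
  rw [← sum_add_sum_compl (Iio i), mul_sum, ← add_zero (∑ j ∈ Iio i, (lam i - m) * w j)]
  refine add_le_add (sum_le_sum fun j _ => ?_) (sum_nonpos fun j hj => ?_)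
  · exact mul_le_mul_of_nonneg_right (by linarith [hm j]) (hw j)
  · have hij : i ≤ j := by simpa using hj
    exact mul_nonpos_of_nonpos_of_nonneg (sub_nonpos.mpr (hmono hij)) (hw j)

theorem div_le_one_sub_div_of_le_mul {t s a l₀ l : ℝ} (hl₀ : 0 < l₀) (hle : l₀ ≤ l)
    (ht : 0 < t) (hta : t ≤ (l - l₀) * a) (has : l * a ≤ s) : t / s ≤ 1 - l₀ / l := by
  have hl : 0 < l := hl₀.trans_le hle
  have ha : 0 < a := pos_of_mul_pos_right (ht.trans_le hta) (sub_nonneg.mpr hle)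
  have hs : 0 < s := (mul_pos hl ha).trans_le has
  rw [div_le_iff₀ hs, one_sub_div hl.ne', div_mul_eq_mul_div, le_div_iff₀ hl]
  nlinarith [mul_le_mul_of_nonneg_left has (sub_nonneg.mpr hle)]

theorem bb_fluctuation_ratio_bound_general {n : ℕ}
    (lam : Fin (n + 1) → ℝ) (hpos : 0 < lam 0) (hmono : Monotone lam)
    (d : Fin (n + 1) → ℝ) (i : Fin (n + 1))
    (hfluct : ∑ j, (lam j - lam i) * d j ^ 2 < 0)
    (hdom : ∑ j ∈ Finset.Iio i, d j ^ 2 ≤ d i ^ 2) :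
    |∑ j, (lam j - lam i) * d j ^ 2| / (∑ j, lam j * d j ^ 2) ≤ 1 - lam 0 / lam i := by
  have hbot : ∀ j, lam 0 ≤ lam j := fun j => hmono (Fin.zero_le j)
  have hnum : |∑ j, (lam j - lam i) * d j ^ 2| ≤ (lam i - lam 0) * ∑ j ∈ Iio i, d j ^ 2 := by
    rw [abs_of_neg hfluct, ← sum_neg_distrib]
    simp only [← neg_mul, neg_sub]
    exact sum_sub_mul_le_mul_sum_Iio hmono hbot (fun j => sq_nonneg (d j)) i
  have hden : lam i * ∑ j ∈ Iio i, d j ^ 2 ≤ ∑ j, lam j * d j ^ 2 :=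
    calc lam i * ∑ j ∈ Iio i, d j ^ 2 ≤ lam i * d i ^ 2 :=
          mul_le_mul_of_nonneg_left hdom (hpos.trans_le (hbot i)).le
      _ ≤ ∑ j, lam j * d j ^ 2 :=
          single_le_sum (fun j _ => mul_nonneg (hpos.trans_le (hbot j)).le (sq_nonneg (d j)))
            (mem_univ i)
  exact div_le_one_sub_div_of_le_mul hpos (hbot i) (abs_pos.mpr hfluct.ne) hnum hden

/-- Ratio bound in fluctuation mode with dominant coefficient: if
Σ_j (λ_j - λ_i) d_j² < 0 and d_i² ≥ Σ_{j<i} d_j², then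
|Σ_j (λ_j - λ_i) d_j²| / (Σ_j λ_j d_j²) ≤ 1 - λ_1/λ_i. -/
theorem bb_fluctuation_ratio_bound {n : ℕ}
    (lam : Fin (n + 1) → ℝ) (hpos : 0 < lam 0) (hmono : Monotone lam)
    (d : Fin (n + 1) → ℝ) (hd : d ≠ 0) (i : Fin (n + 1))
    (hfluct : ∑ j, (lam j - lam i) * d j ^ 2 < 0)
    (hdom : ∑ j ∈ Finset.Iio i, d j ^ 2 ≤ d i ^ 2) :
    |∑ j, (lam j - lam i) * d j ^ 2| / (∑ j, lam j * d j ^ 2) ≤ 1 - lam 0 / lam i :=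
  bb_fluctuation_ratio_bound_general lam hpos hmono d i hfluct hdom
end

section
/- (Lower bound example) For any A ∈ S^n_{++} with smallest and largest eigenvalues λ_1 < λ_n and corresponding unit eigenvectors v_1, v_n, choosing x_0 = A^{-1}(c + v_1 + v_n) for the problem min (1/2)x^T A x - c^T x, the BB iterates satisfy ‖g_k‖ ≥ ((κ-1)/(κ+1))^k ‖g_0‖ for all k, where κ = λ_n/λ_1. -/
/-!
The starting gradient `g₀ = v₁ + vₙ` has equal weight on the two extreme eigenvectors, and so
has every later gradient: on such a vector the inverse Rayleigh quotient is `2 / (λ₁ + λₙ)`, so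
every BB step is the same, and it multiplies the `v₁`-coordinate by `ρ = (λₙ - λ₁) / (λₙ + λ₁)`
and the `vₙ`-coordinate by `-ρ`. Hence `g_k = ρ^k v₁ + (-ρ)^k vₙ` and `‖g_k‖ = ρ^k ‖g₀‖` exactly,
with `ρ = (κ - 1) / (κ + 1)`.
-/

open Matrix

section TwoEigenvectors

variable {ι K : Type*} [Fintype ι] [Field K] {A : Matrix ι ι K} {v w : ι → K} {a b : K}

lemma mulVec_smul_add_smul_of_eigen (hv : A *ᵥ v = a • v) (hw : A *ᵥ w = b • w) (s t : K) :
    A *ᵥ (s • v + t • w) = (s * a) • v + (t * b) • w := by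
  rw [mulVec_add, mulVec_smul, mulVec_smul, hv, hw, smul_smul, smul_smul]

lemma dotProduct_smul_add_smul_of_orthonormal (hv : v ⬝ᵥ v = 1) (hw : w ⬝ᵥ w = 1)
    (hvw : v ⬝ᵥ w = 0) (s t s' t' : K) :
    (s • v + t • w) ⬝ᵥ (s' • v + t' • w) = s * s' + t * t' := by
  simp only [dotProduct_add, add_dotProduct, smul_dotProduct, dotProduct_smul, smul_eq_mul,
    hv, hw, hvw, dotProduct_comm w v]
  ring

lemma inv_rayleigh_smul_add_smul_of_sq_eq (hv : A *ᵥ v = a • v) (hw : A *ᵥ w = b • w)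
    (hv1 : v ⬝ᵥ v = 1) (hw1 : w ⬝ᵥ w = 1) (hvw : v ⬝ᵥ w = 0) {s t : K}
    (hst : s ^ 2 = t ^ 2) (hs : s ≠ 0) :
    ((s • v + t • w) ⬝ᵥ (s • v + t • w)) / ((s • v + t • w) ⬝ᵥ A *ᵥ (s • v + t • w)) =
      2 / (a + b) := by
  rw [mulVec_smul_add_smul_of_eigen hv hw, dotProduct_smul_add_smul_of_orthonormal hv1 hw1 hvw,
    dotProduct_smul_add_smul_of_orthonormal hv1 hw1 hvw]
  calc (s * s + t * t) / (s * (s * a) + t * (t * b)) = (s ^ 2 * 2) / (s ^ 2 * (a + b)) := by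
        congr 1
        · linear_combination -hst
        · linear_combination -b * hst
    _ = 2 / (a + b) := mul_div_mul_left _ _ (pow_ne_zero 2 hs)

lemma sub_smul_mulVec_smul_add_smul_of_eigen (hv : A *ᵥ v = a • v) (hw : A *ᵥ w = b • w)
    (hab : a + b ≠ 0) (s t : K) :
    (s • v + t • w) - (2 / (a + b)) • A *ᵥ (s • v + t • w) =
      ((b - a) / (a + b) * s) • v + (-((b - a) / (a + b)) * t) • w := by
  rw [mulVec_smul_add_smul_of_eigen hv hw, smul_add, smul_smul, smul_smul, add_sub_add_comm,
    ← sub_smul, ← sub_smul]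
  congr 2 <;> field_simp <;> ring

end TwoEigenvectors

lemma gradient_succ_of_gradient_step {ι R : Type*} [Fintype ι] [CommRing R] {A : Matrix ι ι R}
    {c : ι → R} {x g : ℕ → ι → R} {α : ℕ → R} (hg : ∀ k, g k = A *ᵥ x k - c)
    (hx : ∀ k, x (k + 1) = x k - α k • g k) (k : ℕ) :
    g (k + 1) = g k - α k • A *ᵥ g k := by
  rw [hg (k + 1), hx k, mulVec_sub, mulVec_smul, hg k]
  abel

lemma sq_neg_pow {M : Type*} [Monoid M] [HasDistribNeg M] (ρ : M) (k : ℕ) : ((-ρ) ^ k) ^ 2 = (ρ ^ k) ^ 2 := by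
  rw [← pow_mul, ← pow_mul, mul_comm, pow_mul, pow_mul, neg_sq]

theorem bb_gradient_eq_of_gradient_zero_eq_add {ι K : Type*} [Fintype ι] [Field K]
    {A : Matrix ι ι K} {c v w : ι → K} {a b : K} {x g : ℕ → ι → K} {α : ℕ → K} (hv : A *ᵥ v = a • v) (hw : A *ᵥ w = b • w)
    (hv1 : v ⬝ᵥ v = 1) (hw1 : w ⬝ᵥ w = 1) (hvw : v ⬝ᵥ w = 0) (hab : a + b ≠ 0) (hne : a ≠ b)
    (hg : ∀ k, g k = A *ᵥ x k - c) (hx : ∀ k, x (k + 1) = x k - α k • g k)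
    (hα0 : α 0 = (g 0 ⬝ᵥ g 0) / (g 0 ⬝ᵥ A *ᵥ g 0))
    (hα : ∀ k, α (k + 1) = (g k ⬝ᵥ g k) / (g k ⬝ᵥ A *ᵥ g k)) (hg0 : g 0 = v + w) (k : ℕ) :
    g k = ((b - a) / (a + b)) ^ k • v + (-((b - a) / (a + b))) ^ k • w := by
  set ρ := (b - a) / (a + b)
  have hρ : ρ ≠ 0 := div_ne_zero (sub_ne_zero.mpr hne.symm) hab
  have step_size (j : ℕ) (hj : g j = ρ ^ j • v + (-ρ) ^ j • w) :
      (g j ⬝ᵥ g j) / (g j ⬝ᵥ A *ᵥ g j) = 2 / (a + b) := by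
    rw [hj]
    exact inv_rayleigh_smul_add_smul_of_sq_eq hv hw hv1 hw1 hvw (sq_neg_pow ρ j).symm
      (pow_ne_zero j hρ)
  suffices ∀ k, g k = ρ ^ k • v + (-ρ) ^ k • w ∧ α k = 2 / (a + b) from (this k).1
  intro k
  induction k with
  | zero =>
    have hg0' : g 0 = ρ ^ 0 • v + (-ρ) ^ 0 • w := by simp [hg0]
    exact ⟨hg0', hα0.trans (step_size 0 hg0')⟩
  | succ k ih =>
    obtain ⟨hgk, hαk⟩ := ih
    refine ⟨?_, (hα k).trans (step_size k hgk)⟩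
    rw [gradient_succ_of_gradient_step hg hx, hgk, hαk,
      sub_smul_mulVec_smul_add_smul_of_eigen hv hw hab, pow_succ', pow_succ']

theorem sqrt_bb_gradient_eq_of_gradient_zero_eq_add {ι : Type*} [Fintype ι] {A : Matrix ι ι ℝ}
    {c v w : ι → ℝ} {a b : ℝ} {x g : ℕ → ι → ℝ} {α : ℕ → ℝ} (hv : A *ᵥ v = a • v)
    (hw : A *ᵥ w = b • w) (hv1 : v ⬝ᵥ v = 1) (hw1 : w ⬝ᵥ w = 1) (hvw : v ⬝ᵥ w = 0)
    (hab : a + b ≠ 0) (hne : a ≠ b) (hg : ∀ k, g k = A *ᵥ x k - c)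
    (hx : ∀ k, x (k + 1) = x k - α k • g k) (hα0 : α 0 = (g 0 ⬝ᵥ g 0) / (g 0 ⬝ᵥ A *ᵥ g 0))
    (hα : ∀ k, α (k + 1) = (g k ⬝ᵥ g k) / (g k ⬝ᵥ A *ᵥ g k)) (hg0 : g 0 = v + w) (k : ℕ) :
    Real.sqrt (g k ⬝ᵥ g k) = |(b - a) / (a + b)| ^ k * Real.sqrt (g 0 ⬝ᵥ g 0) := by
  have hnorm (j : ℕ) : g j ⬝ᵥ g j = (((b - a) / (a + b)) ^ j) ^ 2 * 2 := by
    rw [bb_gradient_eq_of_gradient_zero_eq_add hv hw hv1 hw1 hvw hab hne hg hx hα0 hα hg0,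
      dotProduct_smul_add_smul_of_orthonormal hv1 hw1 hvw, ← sq, ← sq, sq_neg_pow]
    ring
  rw [hnorm k, hnorm 0, pow_zero, one_pow, one_mul, Real.sqrt_mul (sq_nonneg _),
    Real.sqrt_sq_eq_abs, abs_pow]

lemma div_sub_one_div_div_add_one {K : Type*} [Field K] {a b : K} (ha : a ≠ 0) :
    (b / a - 1) / (b / a + 1) = (b - a) / (a + b) := by
  rw [div_sub_one ha, div_add_one ha, div_div_div_cancel_right₀ ha, add_comm]

theorem bb_lower_bound_example_general {n : ℕ}
    (A : Matrix (Fin n) (Fin n) ℝ) (c : Fin n → ℝ)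
    (lam1 lamn : ℝ) (hlam1 : 0 < lam1) (hlt : lam1 < lamn)
    (v1 vn : Fin n → ℝ)
    (hv1 : A.mulVec v1 = lam1 • v1) (hvn : A.mulVec vn = lamn • vn)
    (hu1 : v1 ⬝ᵥ v1 = 1) (hun : vn ⬝ᵥ vn = 1) (horth : v1 ⬝ᵥ vn = 0)
    (x g : ℕ → Fin n → ℝ) (α : ℕ → ℝ)
    (hg : ∀ k, g k = A.mulVec (x k) - c)
    (hx0 : A.mulVec (x 0) = c + v1 + vn)
    (hx : ∀ k, x (k + 1) = x k - α k • g k)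
    (hα0 : α 0 = (g 0 ⬝ᵥ g 0) / (g 0 ⬝ᵥ A.mulVec (g 0)))
    (hα : ∀ k, α (k + 1) = (g k ⬝ᵥ g k) / (g k ⬝ᵥ A.mulVec (g k))) :
    ∀ k, ((lamn / lam1 - 1) / (lamn / lam1 + 1)) ^ k * Real.sqrt (g 0 ⬝ᵥ g 0) ≤
      Real.sqrt (g k ⬝ᵥ g k) := by
  intro k
  have hg0 : g 0 = v1 + vn := by rw [hg 0, hx0]; abel
  rw [div_sub_one_div_div_add_one hlam1.ne', sqrt_bb_gradient_eq_of_gradient_zero_eq_add hv1 hvn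
    hu1 hun horth (by linarith) hlt.ne hg hx hα0 hα hg0 k, ← abs_pow]
  exact mul_le_mul_of_nonneg_right (le_abs_self _) (Real.sqrt_nonneg _)

/-- Lower bound example: For any positive definite A with smallest and
largest eigenvalues λ_1 < λ_n and corresponding unit eigenvectors v_1, v_n, choosing
x_0 = A⁻¹(c + v_1 + v_n) for min (1/2)xᵀAx - cᵀx, the BB iterates satisfy
‖g_k‖ ≥ ((κ-1)/(κ+1))^k ‖g_0‖ for all k, where κ = λ_n/λ_1. -/
theorem bb_lower_bound_example {n : ℕ}
    (A : Matrix (Fin n) (Fin n) ℝ) (hA : A.PosDef) (c : Fin n → ℝ)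
    (lam1 lamn : ℝ) (hlam1 : 0 < lam1) (hlt : lam1 < lamn)
    (v1 vn : Fin n → ℝ)
    (hv1 : A.mulVec v1 = lam1 • v1) (hvn : A.mulVec vn = lamn • vn)
    (hu1 : v1 ⬝ᵥ v1 = 1) (hun : vn ⬝ᵥ vn = 1) (horth : v1 ⬝ᵥ vn = 0)
    (hext : ∀ z : Fin n → ℝ,
      lam1 * (z ⬝ᵥ z) ≤ z ⬝ᵥ A.mulVec z ∧ z ⬝ᵥ A.mulVec z ≤ lamn * (z ⬝ᵥ z))
    (x g : ℕ → Fin n → ℝ) (α : ℕ → ℝ)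
    (hg : ∀ k, g k = A.mulVec (x k) - c)
    (hx0 : A.mulVec (x 0) = c + v1 + vn)
    (hx : ∀ k, x (k + 1) = x k - α k • g k)
    (hα0 : α 0 = (g 0 ⬝ᵥ g 0) / (g 0 ⬝ᵥ A.mulVec (g 0)))
    (hα : ∀ k, α (k + 1) = (g k ⬝ᵥ g k) / (g k ⬝ᵥ A.mulVec (g k))) :
    ∀ k, ((lamn / lam1 - 1) / (lamn / lam1 + 1)) ^ k * Real.sqrt (g 0 ⬝ᵥ g 0) ≤
      Real.sqrt (g k ⬝ᵥ g k) :=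
  bb_lower_bound_example_general A c lam1 lamn hlam1 hlt v1 vn hv1 hvn hu1 hun horth x g α hg hx0 hx
    hα0 hα
end

section
/- Two-coordinate invariance: if the coefficient dynamics is supported on indices 1 and n (d_k^j = 0 for 1 < j < n) and (d_0^1)^2 = (d_0^n)^2, (d_1^1)^2 = (d_1^n)^2, then (d_k^1)^2 = (d_k^n)^2 for all k ≥ 0, and for k ≥ 1, d_{k+1}^1 = d_k^1 (λ_n - λ_1)/(λ_n + λ_1) and d_{k+1}^n = -d_k^n (λ_n - λ_1)/(λ_n + λ_1). -/
/-! Once `a m ^ 2 = b m ^ 2`, both Rayleigh-type quotients in the step to `m + 2` have the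
common factor `a m ^ 2` in numerator and denominator, so the step becomes multiplication by
`±(λₙ - λ₁) / (λₙ + λ₁)`. Such a step preserves `a ^ 2 = b ^ 2`, and equality of the squares at
two consecutive indices therefore propagates to all indices. -/

section

variable {K : Type*} [Field K]

theorem mul_sq_div_weighted_sum_of_sq_eq {l₁ lₙ x y : K} (c : K) (hxy : x ^ 2 = y ^ 2)
    (hden : l₁ * x ^ 2 + lₙ * y ^ 2 ≠ 0) :
    c * y ^ 2 / (l₁ * x ^ 2 + lₙ * y ^ 2) = c / (lₙ + l₁) := by
  have hsum : l₁ * x ^ 2 + lₙ * y ^ 2 = (lₙ + l₁) * y ^ 2 := by rw [hxy]; ring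
  have hy : y ^ 2 ≠ 0 := right_ne_zero_of_mul (hsum ▸ hden)
  rw [hsum, mul_div_mul_right _ _ hy]

theorem bb_step_of_sq_eq {lam1 lamn : K} {a b : ℕ → K}
    (hra : ∀ k, 1 ≤ k → a (k + 1) = a k *
      ((lamn - lam1) * b (k - 1) ^ 2 / (lam1 * a (k - 1) ^ 2 + lamn * b (k - 1) ^ 2)))
    (hrb : ∀ k, 1 ≤ k → b (k + 1) = b k *
      ((lam1 - lamn) * a (k - 1) ^ 2 / (lam1 * a (k - 1) ^ 2 + lamn * b (k - 1) ^ 2)))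
    {m : ℕ} (hden : lam1 * a m ^ 2 + lamn * b m ^ 2 ≠ 0) (hm : a m ^ 2 = b m ^ 2) :
    a (m + 2) = a (m + 1) * ((lamn - lam1) / (lamn + lam1)) ∧
      b (m + 2) = -(b (m + 1) * ((lamn - lam1) / (lamn + lam1))) := by
  constructor
  · rw [hra (m + 1) le_add_self, Nat.add_sub_cancel,
      mul_sq_div_weighted_sum_of_sq_eq _ hm hden]
  · rw [hrb (m + 1) le_add_self, Nat.add_sub_cancel, add_comm (lam1 * _),
      mul_sq_div_weighted_sum_of_sq_eq _ hm.symm (add_comm (lamn * _) _ ▸ hden)]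
    ring

end

theorem bb_two_coordinate_invariance_general (lam1 lamn : ℝ)
    (a b : ℕ → ℝ)
    (hden : ∀ k, lam1 * a k ^ 2 + lamn * b k ^ 2 ≠ 0)
    (hra : ∀ k, 1 ≤ k → a (k + 1) = a k *
      ((lamn - lam1) * b (k - 1) ^ 2 / (lam1 * a (k - 1) ^ 2 + lamn * b (k - 1) ^ 2)))
    (hrb : ∀ k, 1 ≤ k → b (k + 1) = b k *
      ((lam1 - lamn) * a (k - 1) ^ 2 / (lam1 * a (k - 1) ^ 2 + lamn * b (k - 1) ^ 2)))
    (h0 : a 0 ^ 2 = b 0 ^ 2) (h1' : a 1 ^ 2 = b 1 ^ 2) :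
    (∀ k, a k ^ 2 = b k ^ 2) ∧
    (∀ k, 1 ≤ k →
      a (k + 1) = a k * ((lamn - lam1) / (lamn + lam1)) ∧
      b (k + 1) = -(b k * ((lamn - lam1) / (lamn + lam1)))) := by
  have hsq : ∀ k, a k ^ 2 = b k ^ 2 ∧ a (k + 1) ^ 2 = b (k + 1) ^ 2 := by
    intro k
    induction k with
    | zero => exact ⟨h0, h1'⟩
    | succ m ih =>
      obtain ⟨ha, hb⟩ := bb_step_of_sq_eq hra hrb (hden m) ih.1
      refine ⟨ih.2, ?_⟩
      rw [ha, hb, neg_sq, mul_pow, mul_pow, ih.2]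
  refine ⟨fun k => (hsq k).1, fun k hk => ?_⟩
  obtain ⟨m, rfl⟩ := Nat.exists_eq_add_of_le' hk
  exact bb_step_of_sq_eq hra hrb (hden m) (hsq m).1

/-- Two-coordinate invariance: if the BB coefficient dynamics is supported
on indices 1 and n and (d_0^1)² = (d_0^n)², (d_1^1)² = (d_1^n)², then (d_k^1)² = (d_k^n)²
for all k ≥ 0, and for k ≥ 1, d_{k+1}^1 = d_k^1 (λ_n-λ_1)/(λ_n+λ_1) and
d_{k+1}^n = -d_k^n (λ_n-λ_1)/(λ_n+λ_1). -/
theorem bb_two_coordinate_invariance (lam1 lamn : ℝ) (h1 : 0 < lam1) (hlt : lam1 < lamn)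
    (a b : ℕ → ℝ)
    (hden : ∀ k, lam1 * a k ^ 2 + lamn * b k ^ 2 ≠ 0)
    (hra : ∀ k, 1 ≤ k → a (k + 1) = a k *
      ((lamn - lam1) * b (k - 1) ^ 2 / (lam1 * a (k - 1) ^ 2 + lamn * b (k - 1) ^ 2)))
    (hrb : ∀ k, 1 ≤ k → b (k + 1) = b k *
      ((lam1 - lamn) * a (k - 1) ^ 2 / (lam1 * a (k - 1) ^ 2 + lamn * b (k - 1) ^ 2)))
    (h0 : a 0 ^ 2 = b 0 ^ 2) (h1' : a 1 ^ 2 = b 1 ^ 2) :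
    (∀ k, a k ^ 2 = b k ^ 2) ∧
    (∀ k, 1 ≤ k →
      a (k + 1) = a k * ((lamn - lam1) / (lamn + lam1)) ∧
      b (k + 1) = -(b k * ((lamn - lam1) / (lamn + lam1)))) :=
  bb_two_coordinate_invariance_general lam1 lamn a b hden hra hrb h0 h1'
end

section
/- With d_0^1 = d_0^n = 1 and the first gradient-descent step, d_1^1 = (λ_n - λ_1)/(λ_n + λ_1) and d_1^n = -(λ_n - λ_1)/(λ_n + λ_1); and subsequently d_k^1 = ((κ-1)/(κ+1))^k, d_k^n = (-1)^k((κ-1)/(κ+1))^k for all k ≥ 0, where κ = λ_n/λ_1. -/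
/-!
On a two-point spectrum the two BB coefficients always have equal squares, so both step factors
are constant: `(λₙ - λ₁)/(λₙ + λ₁)` for the first index and its negative for the last. A two-step
induction then gives the geometric closed form, and `(κ - 1)/(κ + 1)` is the same ratio.
-/

section TwoPointBB

variable {lam1 lamn : ℝ}

theorem bb_factor_first_of_sq_eq {x y : ℝ} (hx : x ≠ 0) (hyx : y ^ 2 = x ^ 2) :
    (lamn - lam1) * y ^ 2 / (lam1 * x ^ 2 + lamn * y ^ 2) = (lamn - lam1) / (lamn + lam1) := by
  rw [hyx, ← add_mul, mul_div_mul_right _ _ (pow_ne_zero 2 hx), add_comm lam1]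

theorem bb_factor_last_of_sq_eq {x y : ℝ} (hx : x ≠ 0) (hyx : y ^ 2 = x ^ 2) :
    (lam1 - lamn) * x ^ 2 / (lam1 * x ^ 2 + lamn * y ^ 2) = -((lamn - lam1) / (lamn + lam1)) := by
  rw [hyx, ← add_mul, mul_div_mul_right _ _ (pow_ne_zero 2 hx), add_comm lam1, ← neg_div,
    neg_sub]

theorem bb_two_point_closed_form {q : ℝ} (hq : q = (lamn - lam1) / (lamn + lam1)) (hq0 : q ≠ 0)
    {a b : ℕ → ℝ} (h0a : a 0 = 1) (h0b : b 0 = 1) (h1a : a 1 = q) (h1b : b 1 = -q)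
    (hra : ∀ k, a (k + 2) = a (k + 1) *
      ((lamn - lam1) * b k ^ 2 / (lam1 * a k ^ 2 + lamn * b k ^ 2)))
    (hrb : ∀ k, b (k + 2) = b (k + 1) *
      ((lam1 - lamn) * a k ^ 2 / (lam1 * a k ^ 2 + lamn * b k ^ 2))) :
    ∀ k, a k = q ^ k ∧ b k = (-q) ^ k := by
  refine Nat.twoStepInduction ⟨by simp [h0a], by simp [h0b]⟩ ⟨by simp [h1a], by simp [h1b]⟩ ?_
  rintro n ⟨han, hbn⟩ ⟨han', hbn'⟩
  have hx : a n ≠ 0 := han ▸ pow_ne_zero n hq0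
  have hyx : b n ^ 2 = a n ^ 2 := by rw [han, hbn, pow_right_comm, neg_sq, pow_right_comm]
  constructor
  · rw [hra, bb_factor_first_of_sq_eq hx hyx, ← hq, han', ← pow_succ]
  · rw [hrb, bb_factor_last_of_sq_eq hx hyx, ← hq, hbn', ← pow_succ]

theorem kappa_ratio_eq (h1 : lam1 ≠ 0) :
    (lamn / lam1 - 1) / (lamn / lam1 + 1) = (lamn - lam1) / (lamn + lam1) := by
  field_simp

end TwoPointBB

/-- With d_0^1 = d_0^n = 1 and a first gradient-descent step,
d_1^1 = (λ_n-λ_1)/(λ_n+λ_1), d_1^n = -(λ_n-λ_1)/(λ_n+λ_1), and subsequently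
d_k^1 = ((κ-1)/(κ+1))^k, d_k^n = (-1)^k ((κ-1)/(κ+1))^k for all k ≥ 0, κ = λ_n/λ_1. -/
theorem bb_example_exact_rate (lam1 lamn : ℝ) (h1 : 0 < lam1) (hlt : lam1 < lamn)
    (a b : ℕ → ℝ)
    (h0a : a 0 = 1) (h0b : b 0 = 1)
    (hfa : a 1 = a 0 * ((lamn - lam1) * b 0 ^ 2 / (lam1 * a 0 ^ 2 + lamn * b 0 ^ 2)))
    (hfb : b 1 = b 0 * ((lam1 - lamn) * a 0 ^ 2 / (lam1 * a 0 ^ 2 + lamn * b 0 ^ 2)))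
    (hra : ∀ k, 1 ≤ k → a (k + 1) = a k *
      ((lamn - lam1) * b (k - 1) ^ 2 / (lam1 * a (k - 1) ^ 2 + lamn * b (k - 1) ^ 2)))
    (hrb : ∀ k, 1 ≤ k → b (k + 1) = b k *
      ((lam1 - lamn) * a (k - 1) ^ 2 / (lam1 * a (k - 1) ^ 2 + lamn * b (k - 1) ^ 2))) :
    a 1 = (lamn - lam1) / (lamn + lam1) ∧
    b 1 = -((lamn - lam1) / (lamn + lam1)) ∧
    (∀ k, a k = ((lamn / lam1 - 1) / (lamn / lam1 + 1)) ^ k ∧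
      b k = (-1 : ℝ) ^ k * ((lamn / lam1 - 1) / (lamn / lam1 + 1)) ^ k) := by
  set q := (lamn - lam1) / (lamn + lam1) with hq
  have hq0 : q ≠ 0 := (div_pos (sub_pos.2 hlt) (by linarith)).ne'
  have h00 : b 0 ^ 2 = a 0 ^ 2 := by rw [h0a, h0b]
  have h1a : a 1 = q := by
    rw [hfa, bb_factor_first_of_sq_eq (h0a ▸ one_ne_zero) h00, h0a, one_mul]
  have h1b : b 1 = -q := by
    rw [hfb, bb_factor_last_of_sq_eq (h0a ▸ one_ne_zero) h00, h0b, one_mul]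
  have hclosed := bb_two_point_closed_form hq hq0 h0a h0b h1a h1b
    (fun k => hra (k + 1) (Nat.le_add_left 1 k)) (fun k => hrb (k + 1) (Nat.le_add_left 1 k))
  refine ⟨h1a, h1b, fun k => ?_⟩
  rw [kappa_ratio_eq h1.ne', ← neg_pow]
  exact hclosed k
end

section
/- If R-linear bounds |d_k^j| ≤ F_j θ^k hold for all j < i and all k, and at step k one has |d_{k-1}^i| ≥ sqrt(Σ_{j<i} F_j^2) θ^{k-2} ≥ sqrt(Σ_{j<i}(d_{k-1}^j)^2), then |d_{k+1}^i| ≤ (1-1/κ)|d_k^i|. -/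
/-! The BB coefficient `∑ (λⱼ - λᵢ) xⱼ² / ∑ λⱼ xⱼ²` is bounded above by `θ = 1 - λ_min/λ_max`
term by term, since `(1 - θ) λⱼ ≤ λ_min ≤ λᵢ`. Bounding it below by `-θ` amounts to
`∑ ((1 + θ) λⱼ - λᵢ) xⱼ² ≥ 0`: the modes `j < i` contribute at least `-θ λᵢ ∑_{j<i} xⱼ²`, the mode
`i` itself contributes `θ λᵢ xᵢ²`, and the modes `j > i` are nonnegative, so dominance
`∑_{j<i} xⱼ² ≤ xᵢ²` of the `i`-th mode closes the argument. -/

open Finset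

variable {ι : Type*} [Fintype ι] {lam w : ι → ℝ} {a b : ℝ}

noncomputable def bbRatio (lam : ι → ℝ) (i : ι) (x : ι → ℝ) : ℝ :=
  (∑ j, (lam j - lam i) * x j ^ 2) / (∑ j, lam j * x j ^ 2)

theorem sum_sub_mul_le (ha : 0 ≤ a) (hb : 0 < b) (hhi : ∀ j, lam j ≤ b) {i : ι}
    (hi : a ≤ lam i) (hw : ∀ j, 0 ≤ w j) :
    ∑ j, (lam j - lam i) * w j ≤ (1 - a / b) * ∑ j, lam j * w j := by
  rw [mul_sum]
  refine sum_le_sum fun j _ => ?_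
  have : a / b * lam j ≤ a := by
    rw [div_mul_eq_mul_div, div_le_iff₀ hb]
    exact mul_le_mul_of_nonneg_left (hhi j) ha
  nlinarith [hw j]

section Ordered

variable [LinearOrder ι] [LocallyFiniteOrderBot ι]

theorem sum_mul_nonneg_of_dominant {f : ι → ℝ} {i : ι} {c : ℝ} (hc : 0 ≤ c)
    (hw : ∀ j, 0 ≤ w j) (hdom : ∑ j ∈ Iio i, w j ≤ w i)
    (hlt : ∀ j < i, -c ≤ f j) (hi : c ≤ f i) (hgt : ∀ j, i < j → 0 ≤ f j) :
    0 ≤ ∑ j, f j * w j := by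
  have hbelow : -(c * w i) ≤ ∑ j ∈ Iio i, f j * w j :=
    calc -(c * w i) ≤ -c * ∑ j ∈ Iio i, w j := by nlinarith
      _ = ∑ j ∈ Iio i, -c * w j := mul_sum _ _ _
      _ ≤ ∑ j ∈ Iio i, f j * w j :=
          sum_le_sum fun j hj => mul_le_mul_of_nonneg_right (hlt j (mem_Iio.1 hj)) (hw j)
  have habove : c * w i ≤ ∑ j ∈ (Iio i)ᶜ, f j * w j := by
    refine (mul_le_mul_of_nonneg_right hi (hw i)).trans
      (single_le_sum (f := fun j => f j * w j) (fun j hj => ?_) (by simp))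
    rcases (not_lt.1 (mem_Iio.not.1 (mem_compl.1 hj))).lt_or_eq with hij | rfl
    · exact mul_nonneg (hgt j hij) (hw j)
    · exact mul_nonneg (hc.trans hi) (hw _)
  rw [← sum_add_sum_compl (Iio i)]
  linarith

theorem neg_mul_sum_le_sum_sub_mul (ha : 0 < a) (hlo : ∀ j, a ≤ lam j) (hhi : ∀ j, lam j ≤ b)
    (hmono : Monotone lam) {i : ι} (hw : ∀ j, 0 ≤ w j) (hdom : ∑ j ∈ Iio i, w j ≤ w i) :
    -((1 - a / b) * ∑ j, lam j * w j) ≤ ∑ j, (lam j - lam i) * w j := by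
  set θ := 1 - a / b
  have hab : a ≤ b := (hlo i).trans (hhi i)
  have hθ : 0 ≤ θ := sub_nonneg.2 (div_le_one_of_le₀ hab (ha.le.trans hab))
  have hcontract : (1 - θ) * lam i ≤ a := by
    rw [sub_sub_cancel, div_mul_eq_mul_div, div_le_iff₀ (ha.trans_le hab)]
    exact mul_le_mul_of_nonneg_left (hhi i) ha.le
  have hpos : ∀ j, 0 < lam j := fun j => ha.trans_le (hlo j)
  have key := sum_mul_nonneg_of_dominant (f := fun j => lam j - lam i + θ * lam j)
    (mul_nonneg hθ (hpos i).le) hw hdom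
    (fun j _ => by nlinarith [hlo j, hpos j]) (by linarith)
    (fun j hij => by nlinarith [hmono hij.le, hpos j])
  simp only [add_mul, sum_add_distrib, mul_assoc, ← mul_sum] at key
  linarith

theorem abs_bbRatio_le (ha : 0 < a) (hlo : ∀ j, a ≤ lam j) (hhi : ∀ j, lam j ≤ b)
    (hmono : Monotone lam) {i : ι} {x : ι → ℝ} (hdom : ∑ j ∈ Iio i, x j ^ 2 ≤ x i ^ 2) :
    |bbRatio lam i x| ≤ 1 - a / b := by
  have hab : a ≤ b := (hlo i).trans (hhi i)
  have hw : ∀ j, 0 ≤ x j ^ 2 := fun j => sq_nonneg _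
  have hD : 0 ≤ ∑ j, lam j * x j ^ 2 :=
    sum_nonneg fun j _ => mul_nonneg (ha.le.trans (hlo j)) (hw j)
  rw [bbRatio, abs_div, abs_of_nonneg hD]
  exact div_le_of_le_mul₀ hD (sub_nonneg.2 (div_le_one_of_le₀ hab (ha.le.trans hab)))
    (abs_le.2 ⟨neg_mul_sum_le_sum_sub_mul ha hlo hhi hmono hw hdom,
      sum_sub_mul_le ha.le (ha.trans_le hab) hhi (hlo i) hw⟩)

end Ordered

theorem bb_dominance_implies_contraction_general {n : ℕ}
    (lam : Fin (n + 1) → ℝ) (hpos : 0 < lam 0) (hmono : Monotone lam)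
    (κ θ : ℝ) (hκ : κ = lam (Fin.last n) / lam 0)
    (d : ℕ → Fin (n + 1) → ℝ) (F : Fin (n + 1) → ℝ)
    (i : Fin (n + 1)) (k : ℕ) (hk : 2 ≤ k)
    (hrec : ∀ m, 1 ≤ m → ∀ l, d (m + 1) l = d m l *
      ((∑ j, (lam j - lam l) * d (m - 1) j ^ 2) / (∑ j, lam j * d (m - 1) j ^ 2)))
    (hdom1 : Real.sqrt (∑ j ∈ Finset.Iio i, F j ^ 2) * θ ^ (k - 2) ≤ |d (k - 1) i|)
    (hdom2 : Real.sqrt (∑ j ∈ Finset.Iio i, d (k - 1) j ^ 2) ≤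
      Real.sqrt (∑ j ∈ Finset.Iio i, F j ^ 2) * θ ^ (k - 2)) :
    |d (k + 1) i| ≤ (1 - 1 / κ) * |d k i| := by
  have hdom : ∑ j ∈ Iio i, d (k - 1) j ^ 2 ≤ d (k - 1) i ^ 2 := by
    rw [← sq_abs (d (k - 1) i), ← Real.sqrt_le_left (abs_nonneg _)]
    exact hdom2.trans hdom1
  have hratio : |bbRatio lam i (d (k - 1))| ≤ 1 - 1 / κ := by
    rw [hκ, one_div_div]
    exact abs_bbRatio_le hpos (fun j => hmono (Fin.zero_le j)) (fun j => hmono (Fin.le_last j))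
      hmono hdom
  calc |d (k + 1) i| = |bbRatio lam i (d (k - 1))| * |d k i| := by
        rw [hrec k (by omega) i, abs_mul, mul_comm, bbRatio]
    _ ≤ (1 - 1 / κ) * |d k i| := by gcongr

/-- If R-linear bounds |d_k^j| ≤ F_j θ^k hold for all j < i and all k, and
at step k one has |d_{k-1}^i| ≥ √(Σ_{j<i} F_j²) θ^{k-2} ≥ √(Σ_{j<i}(d_{k-1}^j)²), then
|d_{k+1}^i| ≤ (1-1/κ)|d_k^i|. -/
theorem bb_dominance_implies_contraction {n : ℕ}
    (lam : Fin (n + 1) → ℝ) (hpos : 0 < lam 0) (hmono : Monotone lam)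
    (κ θ : ℝ) (hκ : κ = lam (Fin.last n) / lam 0) (hθ : θ = 1 - 1 / κ)
    (hθ0 : 0 < θ) (hθ1 : θ < 1)
    (d : ℕ → Fin (n + 1) → ℝ) (F : Fin (n + 1) → ℝ) (hFpos : ∀ j, 0 < F j)
    (i : Fin (n + 1)) (k : ℕ) (hk : 2 ≤ k)
    (hrec : ∀ m, 1 ≤ m → ∀ l, d (m + 1) l = d m l *
      ((∑ j, (lam j - lam l) * d (m - 1) j ^ 2) / (∑ j, lam j * d (m - 1) j ^ 2)))
    (hF : ∀ j, j < i → ∀ m, |d m j| ≤ F j * θ ^ m)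
    (hdom1 : Real.sqrt (∑ j ∈ Finset.Iio i, F j ^ 2) * θ ^ (k - 2) ≤ |d (k - 1) i|)
    (hdom2 : Real.sqrt (∑ j ∈ Finset.Iio i, d (k - 1) j ^ 2) ≤
      Real.sqrt (∑ j ∈ Finset.Iio i, F j ^ 2) * θ ^ (k - 2)) :
    |d (k + 1) i| ≤ (1 - 1 / κ) * |d k i| :=
  bb_dominance_implies_contraction_general lam hpos hmono κ θ hκ d F i k hk hrec hdom1 hdom2
end
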